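/- arXiv:1307.4999 — 4 statements merged into one kernel-verified Lean document; each statement's English description precedes it below -/
import Mathlib

section
/- Let ν ∈ ℝ^d be Diophantine of exponent τ with constant c₀, with all components nonzero. Fix k with m_k ≠ 0 for a given nonzero m ∈ ℤ^d, and let Π = {x ∈ ℝ^d : ν · x = c, x_j ∈ [a_j, b_j] for j ≠ k}. Then there is a constant C depending only on ν, d, and the lengths b_j − a_j such that for all λ > 1, |∫_Π e^{2πi λ m·y} dσ(y)| ≤ C λ^{−(d−1)} |m|^{(d−1)τ}, where dσ is the (d−1)-dimensional surface measure on Π and |m| = |m₁|+...+|m_d|. -/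
/-!
The hyperplane `ν · x = c` is the graph of an affine function of the coordinates `x j`, `j ≠ k`
(a Diophantine `ν` has no zero entry). On the range of an injective affine map, the Hausdorff
measure of the right dimension is a constant multiple of the pushforward of Lebesgue measure, since
both are Haar measures on the image subspace. So the integral over `Π` is a constant times an
integral over a box, which factors into one-dimensional integrals `∫ e^{2πiλ α_j t} dt`, each of
size at most `1 / (πλ|α_j|)`, with `α_j = m_j - m_k ν_j / ν_k`. The Diophantine condition applied to
`m_j e_k - m_k e_j` gives `|ν_k| |α_j| ≥ c₀ |m|^{-τ}`.
-/

open MeasureTheory Module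
open scoped NNReal

section AreaFormula

variable {F E : Type*}
  [NormedAddCommGroup F] [NormedSpace ℝ F] [FiniteDimensional ℝ F] [MeasurableSpace F]
  [BorelSpace F] [NormedAddCommGroup E] [NormedSpace ℝ E] [MeasurableSpace E] [BorelSpace E]
  (μ : Measure F) [μ.IsAddHaarMeasure] {L : F →ₗ[ℝ] E}

theorem LinearMap.exists_hausdorffMeasure_restrict_range_eq_smul_map
    (hL : Function.Injective L) (p : E) :
    ∃ κ : ℝ≥0, (μH[finrank ℝ F] : Measure E).restrict (Set.range fun y ↦ p + L y)
      = κ • μ.map (fun y ↦ p + L y) := by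
  let e : F ≃L[ℝ] LinearMap.range L := (LinearEquiv.ofInjective L hL).toContinuousLinearEquiv
  have hdim : finrank ℝ (LinearMap.range L) = finrank ℝ F :=
    (LinearEquiv.ofInjective L hL).finrank_eq.symm
  let ψ : LinearMap.range L → E := fun v ↦ p + v
  have hψ : Isometry ψ := (isometry_add_left p).comp isometry_subtype_coe
  have hcomp : ψ ∘ e = fun y ↦ p + L y := rfl
  have hrange : Set.range ψ = Set.range fun y ↦ p + L y := by
    rw [← hcomp, Set.range_comp, e.surjective.range_eq, Set.image_univ]
  refine ⟨(μH[finrank ℝ (LinearMap.range L)] : Measure (LinearMap.range L)).addHaarScalarFactor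
    (μ.map e), ?_⟩
  rw [← hrange, ← hdim, ← hψ.map_hausdorffMeasure (Or.inl (Nat.cast_nonneg _))]
  conv_lhs => rw [Measure.isAddLeftInvariant_eq_smul μH[finrank ℝ (LinearMap.range L)] (μ.map e)]
  rw [Measure.map_smul, Measure.map_map hψ.continuous.measurable e.continuous.measurable, hcomp]

theorem LinearMap.exists_setIntegral_hausdorffMeasure_eq_smul {G : Type*} [NormedAddCommGroup G]
    [NormedSpace ℝ G] (hL : Function.Injective L) (p : E) :
    ∃ κ : ℝ≥0, ∀ s ⊆ Set.range (fun y ↦ p + L y), ∀ f : E → G,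
      ∫ x in s, f x ∂μH[finrank ℝ F] = κ • ∫ y in (fun y ↦ p + L y) ⁻¹' s, f (p + L y) ∂μ := by
  obtain ⟨κ, hκ⟩ := L.exists_hausdorffMeasure_restrict_range_eq_smul_map μ hL p
  have hemb : MeasurableEmbedding fun y ↦ p + L y :=
    ((Homeomorph.addLeft p).isClosedEmbedding.comp
      (L.isClosedEmbedding_of_injective (LinearMap.ker_eq_bot.mpr hL))).measurableEmbedding
  refine ⟨κ, fun s hs f ↦ ?_⟩
  rw [← Measure.restrict_restrict_of_subset hs, hκ, Measure.restrict_smul,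
    integral_smul_nnreal_measure, hemb.restrict_map, hemb.integral_map]

end AreaFormula

section HyperplaneChart

variable {d : ℕ} (ν : EuclideanSpace ℝ (Fin d)) (k : Fin d)

/-- Solves `∑ i, ν i * x i = 0` for `x k` in terms of the other coordinates. -/
noncomputable def hyperplaneChart : ({j // j ≠ k} → ℝ) →ₗ[ℝ] EuclideanSpace ℝ (Fin d) where
  toFun y := WithLp.toLp 2 fun j ↦
    if h : j = k then -(∑ i : {j // j ≠ k}, ν i * y i) / ν k else y ⟨j, h⟩
  map_add' y z := by
    ext j
    by_cases h : j = k
    · simp [h, mul_add, Finset.sum_add_distrib]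
      ring
    · simp [h]
  map_smul' r y := by
    ext j
    by_cases h : j = k
    · simp [h, mul_left_comm _ r, ← Finset.mul_sum]
      ring
    · simp [h]

variable {ν k}

theorem hyperplaneChart_apply_of_ne (y : {j // j ≠ k} → ℝ) {j : Fin d} (h : j ≠ k) :
    hyperplaneChart ν k y j = y ⟨j, h⟩ :=
  dif_neg h

theorem hyperplaneChart_apply_self (y : {j // j ≠ k} → ℝ) :
    hyperplaneChart ν k y k = -(∑ i : {j // j ≠ k}, ν i * y i) / ν k :=
  dif_pos rfl

variable (ν k)

theorem hyperplaneChart_injective : Function.Injective (hyperplaneChart ν k) := fun y z h ↦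
  funext fun i ↦ by
    simpa [hyperplaneChart_apply_of_ne _ i.2] using congr($h i.1)

theorem sum_mul_single_add_hyperplaneChart (w : Fin d → ℝ) (c : ℝ) (y : {j // j ≠ k} → ℝ) :
    ∑ j, w j * (EuclideanSpace.single k (c / ν k) + hyperplaneChart ν k y) j
      = w k * c / ν k + ∑ i : {j // j ≠ k}, (w i - w k * ν i / ν k) * y i := by
  classical
  rw [Fintype.sum_eq_add_sum_subtype_ne _ k]
  simp only [PiLp.add_apply, PiLp.single_apply, hyperplaneChart_apply_self, if_true]
  have hoff : ∀ i : {j // j ≠ k}, w i * ((if (i : Fin d) = k then c / ν k else 0)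
      + hyperplaneChart ν k y i) = w i * y i := fun i ↦ by
    rw [if_neg i.2, zero_add, hyperplaneChart_apply_of_ne _ i.2]
  have hshift : ∑ i : {j // j ≠ k}, w k * ν i / ν k * y i
      = w k / ν k * ∑ i : {j // j ≠ k}, ν i * y i := by
    rw [Finset.mul_sum]
    exact Finset.sum_congr rfl fun i _ ↦ by ring
  simp only [hoff, sub_mul, Finset.sum_sub_distrib, hshift]
  ring

theorem range_single_add_hyperplaneChart (hk : ν k ≠ 0) (c : ℝ) :
    Set.range (fun y ↦ EuclideanSpace.single k (c / ν k) + hyperplaneChart ν k y)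
      = {x | ∑ i, ν i * x i = c} := by
  classical
  ext x
  constructor
  · rintro ⟨y, rfl⟩
    rw [Set.mem_ofPred_eq, sum_mul_single_add_hyperplaneChart ν k (fun i ↦ ν i)]
    simp [hk]
  · intro hx
    refine ⟨fun i ↦ x i, ?_⟩
    ext j
    by_cases h : j = k
    · subst h
      rw [Set.mem_ofPred_eq, Fintype.sum_eq_add_sum_subtype_ne _ j] at hx
      simp only [PiLp.add_apply, PiLp.single_apply, hyperplaneChart_apply_self, if_true]
      field_simp
      linarith
    · simp [hyperplaneChart_apply_of_ne _ h, h]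

end HyperplaneChart

theorem setIntegral_univ_pi_prod {ι : Type*} [Fintype ι] {E : ι → Type*}
    [∀ i, MeasurableSpace (E i)] (μ : ∀ i, Measure (E i)) [∀ i, SigmaFinite (μ i)]
    {𝕜 : Type*} [RCLike 𝕜] (f : ∀ i, E i → 𝕜) (s : ∀ i, Set (E i)) :
    ∫ y in Set.univ.pi s, ∏ i, f i (y i) ∂Measure.pi μ = ∏ i, ∫ t in s i, f i t ∂μ i := by
  rw [Measure.restrict_pi_pi, integral_fintype_prod_eq_prod]

theorem norm_setIntegral_Icc_exp_mul_I_le {ω : ℝ} (hω : ω ≠ 0) (a b : ℝ) :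
    ‖∫ t in Set.Icc a b, Complex.exp (ω * t * Complex.I)‖ ≤ 2 / |ω| := by
  rcases le_or_gt a b with hab | hba
  · have hωI : (ω * Complex.I : ℂ) ≠ 0 := by simp [hω]
    rw [integral_Icc_eq_integral_Ioc, ← intervalIntegral.integral_of_le hab]
    simp_rw [mul_right_comm _ _ Complex.I]
    rw [integral_exp_mul_complex hωI, norm_div, norm_mul, Complex.norm_I, mul_one,
      Complex.norm_real, Real.norm_eq_abs]
    gcongr
    calc _ ≤ ‖Complex.exp (ω * b * Complex.I)‖ + ‖Complex.exp (ω * a * Complex.I)‖ := by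
          simp_rw [mul_right_comm _ Complex.I]
          exact norm_sub_le _ _
      _ = 2 := by
          rw [← Complex.ofReal_mul, ← Complex.ofReal_mul, Complex.norm_exp_ofReal_mul_I,
            Complex.norm_exp_ofReal_mul_I]
          norm_num
  · rw [Set.Icc_eq_empty hba.not_ge, Measure.restrict_empty, integral_zero_measure, norm_zero]
    positivity

theorem one_le_sum_abs_intCast {ι : Type*} [Fintype ι] {m : ι → ℤ} {k : ι} (hmk : m k ≠ 0) :
    1 ≤ ∑ j, |(m j : ℝ)| :=
  (by exact_mod_cast Int.one_le_abs hmk : (1 : ℝ) ≤ |(m k : ℝ)|).trans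
    (Finset.single_le_sum (fun j _ ↦ abs_nonneg (m j : ℝ)) (Finset.mem_univ k))

def IsDiophantine {ι : Type*} [Fintype ι] (ν : ι → ℝ) (τ c₀ : ℝ) : Prop :=
  ∀ m : ι → ℤ, m ≠ 0 → c₀ * (∑ i, |(m i : ℝ)|) ^ (-τ) ≤ |∑ i, (m i : ℝ) * ν i|

namespace IsDiophantine

variable {ι : Type*} [Fintype ι] [DecidableEq ι] {ν : ι → ℝ} {τ c₀ : ℝ}

theorem le_abs_apply (h : IsDiophantine ν τ c₀) (k : ι) : c₀ ≤ |ν k| := by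
  simpa [Pi.single_apply, apply_ite] using h (Pi.single k 1) (by simp)

theorem le_abs_mul_sub_mul (h : IsDiophantine ν τ c₀) {i k : ι} (hik : i ≠ k) {m : ι → ℤ}
    (hmk : m k ≠ 0) :
    c₀ * (|(m i : ℝ)| + |(m k : ℝ)|) ^ (-τ) ≤ |m i * ν k - m k * ν i| := by
  have hw := h (Pi.single k (m i) - Pi.single i (m k)) fun h0 ↦
    hmk (by simpa [hik] using congr_fun h0 i)
  have habs : ∀ j, |((Pi.single k (m i) - Pi.single i (m k) : ι → ℤ) j : ℝ)|
      = (Pi.single k |(m i : ℝ)| : ι → ℝ) j + (Pi.single i |(m k : ℝ)| : ι → ℝ) j := by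
    intro j
    by_cases hjk : j = k
    · subst hjk; simp [hik.symm]
    · by_cases hji : j = i
      · subst hji; simp [hjk]
      · simp [hjk, hji]
  simp only [habs, Finset.sum_add_distrib, Finset.sum_pi_single'] at hw
  simpa [sub_mul, Finset.sum_sub_distrib, Pi.single_apply, add_comm] using hw

variable (hc₀ : 0 < c₀) (hτ : 0 ≤ τ) {i k : ι} (hik : i ≠ k) {m : ι → ℤ} (hmk : m k ≠ 0)
include hc₀ hτ hik hmk

theorem le_abs_mul_abs_sub (h : IsDiophantine ν τ c₀) :
    c₀ * (∑ j, |(m j : ℝ)|) ^ (-τ) ≤ |ν k| * |m i - m k * ν i / ν k| := by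
  have hνk : ν k ≠ 0 := abs_pos.mp (hc₀.trans_le (h.le_abs_apply k))
  have hpair : |(m i : ℝ)| + |(m k : ℝ)| ≤ ∑ j, |(m j : ℝ)| := by
    rw [← Finset.sum_pair (f := fun j ↦ |(m j : ℝ)|) hik]
    exact Finset.sum_le_univ_sum_of_nonneg fun j ↦ abs_nonneg _
  have hmk' : (1 : ℝ) ≤ |(m k : ℝ)| := by exact_mod_cast Int.one_le_abs hmk
  calc c₀ * (∑ j, |(m j : ℝ)|) ^ (-τ) ≤ c₀ * (|(m i : ℝ)| + |(m k : ℝ)|) ^ (-τ) := by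
        gcongr c₀ * ?_
        exact Real.rpow_le_rpow_of_nonpos (by linarith [abs_nonneg (m i : ℝ)]) hpair
          (neg_nonpos.mpr hτ)
    _ ≤ |m i * ν k - m k * ν i| := h.le_abs_mul_sub_mul hik hmk
    _ = |ν k| * |m i - m k * ν i / ν k| := by
        rw [← abs_mul]
        congr 1
        field_simp

theorem abs_sub_mul_div_pos (h : IsDiophantine ν τ c₀) : 0 < |m i - m k * ν i / ν k| := by
  have hM := one_le_sum_abs_intCast hmk
  exact pos_of_mul_pos_right ((by positivity : 0 < c₀ * (∑ j, |(m j : ℝ)|) ^ (-τ)).trans_le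
    (h.le_abs_mul_abs_sub hc₀ hτ hik hmk)) (abs_nonneg _)

theorem two_div_abs_le (h : IsDiophantine ν τ c₀) {lam : ℝ} (hlam : 0 < lam) :
    2 / |2 * Real.pi * lam * (m i - m k * ν i / ν k)|
      ≤ |ν k| / (Real.pi * c₀) * (∑ j, |(m j : ℝ)|) ^ τ / lam := by
  have hM := one_le_sum_abs_intCast hmk
  have hfreq := h.le_abs_mul_abs_sub hc₀ hτ hik hmk
  rw [Real.rpow_neg (by positivity), ← div_eq_mul_inv, div_le_iff₀ (by positivity)] at hfreq
  rw [abs_mul, abs_of_pos (by positivity : 0 < 2 * Real.pi * lam),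
    div_le_div_iff₀ (mul_pos (by positivity) (h.abs_sub_mul_div_pos hc₀ hτ hik hmk)) hlam]
  calc 2 * lam = 2 * Real.pi * lam * (c₀ / (Real.pi * c₀)) := by field_simp
    _ ≤ 2 * Real.pi * lam *
        (|ν k| * |m i - m k * ν i / ν k| * (∑ j, |(m j : ℝ)|) ^ τ / (Real.pi * c₀)) := by
        gcongr
    _ = _ := by ring

end IsDiophantine

theorem Fin.card_subtype_ne_cast {d : ℕ} (k : Fin d) :
    (Fintype.card {j // j ≠ k} : ℝ) = d - 1 := by
  rw [Fintype.card_subtype_compl, Fintype.card_fin, Fintype.card_unique, Nat.cast_sub k.pos,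
    Nat.cast_one]

theorem exists_norm_setIntegral_hyperplane_box_le {d : ℕ} {ν : EuclideanSpace ℝ (Fin d)}
    {k : Fin d} (hk : ν k ≠ 0) (c : ℝ) (a b : Fin d → ℝ) :
    ∃ κ : ℝ≥0, ∀ (w : Fin d → ℝ) (lam : ℝ),
      (∀ i : {j // j ≠ k}, 2 * Real.pi * lam * (w i - w k * ν i / ν k) ≠ 0) →
      ‖∫ y in {x : EuclideanSpace ℝ (Fin d) |
            ∑ i, ν i * x i = c ∧ ∀ j, j ≠ k → x j ∈ Set.Icc (a j) (b j)},
          Complex.exp (2 * Real.pi * Complex.I * lam * ((∑ i, w i * y i : ℝ) : ℂ))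
          ∂(μH[(d:ℝ) - 1])‖
        ≤ κ * ∏ i : {j // j ≠ k}, 2 / |2 * Real.pi * lam * (w i - w k * ν i / ν k)| := by
  obtain ⟨κ, hκ⟩ := (hyperplaneChart ν k).exists_setIntegral_hausdorffMeasure_eq_smul volume
    (hyperplaneChart_injective ν k) (EuclideanSpace.single k (c / ν k)) (G := ℂ)
  refine ⟨κ, fun w lam hω ↦ ?_⟩
  have hsub : {x : EuclideanSpace ℝ (Fin d) |
      ∑ i, ν i * x i = c ∧ ∀ j, j ≠ k → x j ∈ Set.Icc (a j) (b j)}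
      ⊆ Set.range fun y ↦ EuclideanSpace.single k (c / ν k) + hyperplaneChart ν k y := by
    rw [range_single_add_hyperplaneChart ν k hk]
    exact fun x hx ↦ hx.1
  have hpre : (fun y ↦ EuclideanSpace.single k (c / ν k) + hyperplaneChart ν k y) ⁻¹'
      {x | ∑ i, ν i * x i = c ∧ ∀ j, j ≠ k → x j ∈ Set.Icc (a j) (b j)}
      = Set.univ.pi fun i : {j // j ≠ k} ↦ Set.Icc (a i) (b i) := by
    ext y
    have hy : EuclideanSpace.single k (c / ν k) + hyperplaneChart ν k y ∈
        {x | ∑ i, ν i * x i = c} :=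
      range_single_add_hyperplaneChart ν k hk c ▸ Set.mem_range_self y
    have hcoord : ∀ j (hj : j ≠ k),
        (EuclideanSpace.single k (c / ν k) + hyperplaneChart ν k y) j = y ⟨j, hj⟩ := fun j hj ↦ by
      simp [hj, hyperplaneChart_apply_of_ne]
    simp only [Set.mem_preimage, Set.mem_ofPred_eq, Set.mem_univ_pi]
    exact ⟨fun h i ↦ hcoord i i.2 ▸ h.2 i i.2, fun h ↦ ⟨hy, fun j hj ↦ hcoord j hj ▸ h ⟨j, hj⟩⟩⟩
  have hphase : ∀ y : {j // j ≠ k} → ℝ,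
      Complex.exp (2 * Real.pi * Complex.I * lam *
          ((w k * c / ν k + ∑ i : {j // j ≠ k}, (w i - w k * ν i / ν k) * y i : ℝ) : ℂ))
      = Complex.exp ((2 * Real.pi * lam * (w k * c / ν k) : ℝ) * Complex.I)
        * ∏ i : {j // j ≠ k},
          Complex.exp ((2 * Real.pi * lam * (w i - w k * ν i / ν k) : ℝ) * y i * Complex.I) := by
    intro y
    rw [← Complex.exp_sum, ← Complex.exp_add]
    push_cast
    rw [mul_add, Finset.mul_sum]
    congr 2
    · ring
    · exact Finset.sum_congr rfl fun i _ ↦ by ring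
  rw [← Fin.card_subtype_ne_cast k, ← finrank_fintype_fun_eq_card (R := ℝ), hκ _ hsub, hpre]
  simp_rw [sum_mul_single_add_hyperplaneChart, hphase]
  rw [integral_const_mul, volume_pi, NNReal.smul_def, setIntegral_univ_pi_prod (fun _ ↦ volume)
      fun (i : {j // j ≠ k}) (t : ℝ) ↦
        Complex.exp ((2 * Real.pi * lam * (w i - w k * ν i / ν k) : ℝ) * t * Complex.I),
    norm_smul, norm_mul, Complex.norm_exp_ofReal_mul_I, one_mul, norm_prod, NNReal.norm_eq]
  gcongr with i
  exact norm_setIntegral_Icc_exp_mul_I_le (hω i) _ _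

theorem stmt4_general (d : ℕ) (τ c₀ : ℝ) (hτ : 0 < τ) (hc₀ : 0 < c₀)
    (ν : EuclideanSpace ℝ (Fin d))
    (hdio : ∀ m : Fin d → ℤ, m ≠ 0 →
      c₀ * (∑ i, |(m i : ℝ)|) ^ (-τ) ≤ |∑ i, (m i : ℝ) * ν i|)
    (k : Fin d) (m : Fin d → ℤ) (hmk : m k ≠ 0)
    (c : ℝ) (a b : Fin d → ℝ) :
    ∃ C > 0, ∀ lam : ℝ, 1 < lam →
      ‖∫ y in {x : EuclideanSpace ℝ (Fin d) |
            ∑ i, ν i * x i = c ∧ ∀ j, j ≠ k → x j ∈ Set.Icc (a j) (b j)},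
          Complex.exp (2 * Real.pi * Complex.I * lam * ((∑ i, (m i : ℝ) * y i : ℝ) : ℂ))
          ∂(μH[(d:ℝ) - 1])‖
        ≤ C * lam ^ (-((d:ℝ) - 1)) * (∑ i, |(m i : ℝ)|) ^ (((d:ℝ) - 1) * τ) := by
  have hν : IsDiophantine ν.ofLp τ c₀ := hdio
  have hk : ν k ≠ 0 := abs_pos.mp (hc₀.trans_le (hν.le_abs_apply k))
  obtain ⟨κ, hκ⟩ := exists_norm_setIntegral_hyperplane_box_le hk c a b
  set B := |ν k| / (Real.pi * c₀)
  set M := ∑ i, |(m i : ℝ)|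
  refine ⟨κ * B ^ ((d:ℝ) - 1) + 1, by positivity, fun lam hlam ↦ ?_⟩
  have hlam : 0 < lam := one_pos.trans hlam
  have hω (i : {j // j ≠ k}) : 2 * Real.pi * lam * (m i - m k * ν i / ν k) ≠ 0 :=
    mul_ne_zero (by positivity) (abs_pos.mp (hν.abs_sub_mul_div_pos hc₀ hτ.le i.2 hmk))
  calc _ ≤ κ * ∏ i : {j // j ≠ k}, 2 / |2 * Real.pi * lam * (m i - m k * ν i / ν k)| :=
        hκ (fun i ↦ m i) lam hω
    _ ≤ κ * ∏ _i : {j // j ≠ k}, B * M ^ τ / lam := by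
        gcongr κ * ?_
        exact Finset.prod_le_prod (fun i _ ↦ by positivity)
          fun i _ ↦ hν.two_div_abs_le hc₀ hτ.le i.2 hmk hlam
    _ = κ * B ^ ((d:ℝ) - 1) * lam ^ (-((d:ℝ) - 1)) * M ^ (((d:ℝ) - 1) * τ) := by
        rw [Finset.prod_const, Finset.card_univ, ← Real.rpow_natCast, Fin.card_subtype_ne_cast,
          Real.div_rpow (by positivity) hlam.le, Real.mul_rpow (by positivity) (by positivity),
          ← Real.rpow_mul (by positivity), Real.rpow_neg hlam.le, mul_comm τ]
        ring
    _ ≤ _ := by gcongr; linarith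

/-- Diophantine decay of oscillatory integrals over a (d−1)-dimensional rectangle Π
lying in the hyperplane {ν·x = c}: if ν is Diophantine of exponent τ and m_k ≠ 0, then
|∫_Π e^{2πiλ m·y} dσ(y)| ≤ C λ^{−(d−1)} |m|^{(d−1)τ} for all λ > 1, where σ is the
(d−1)-dimensional Hausdorff measure. -/
theorem stmt4 (d : ℕ) (hd : 2 ≤ d) (τ c₀ : ℝ) (hτ : 0 < τ) (hc₀ : 0 < c₀)
    (ν : EuclideanSpace ℝ (Fin d))
    (hdio : ∀ m : Fin d → ℤ, m ≠ 0 →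
      c₀ * (∑ i, |(m i : ℝ)|) ^ (-τ) ≤ |∑ i, (m i : ℝ) * ν i|)
    (k : Fin d) (m : Fin d → ℤ) (hm : m ≠ 0) (hmk : m k ≠ 0)
    (c : ℝ) (a b : Fin d → ℝ) :
    ∃ C > 0, ∀ lam : ℝ, 1 < lam →
      ‖∫ y in {x : EuclideanSpace ℝ (Fin d) |
            ∑ i, ν i * x i = c ∧ ∀ j, j ≠ k → x j ∈ Set.Icc (a j) (b j)},
          Complex.exp (2 * Real.pi * Complex.I * lam * ((∑ i, (m i : ℝ) * y i : ℝ) : ℂ))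
          ∂(μH[(d:ℝ) - 1])‖
        ≤ C * lam ^ (-((d:ℝ) - 1)) * (∑ i, |(m i : ℝ)|) ^ (((d:ℝ) - 1) * τ) :=
  stmt4_general d τ c₀ hτ hc₀ ν hdio k m hmk c a b
end

section
/- Let D ⊂ ℝ^d be a bounded domain with diam(D) ≤ 1, and suppose the Poisson kernel P(x,·) on a boundary face Π ⊂ ∂D satisfies |P(x,y)| ≤ C₀ d(x)/|x−y|^d for σ-a.e. y ∈ Π, where d(x) = dist(x, ∂D). Let Π lie in a hyperplane and let Π_ρ = {y ∈ Π : dist(y, ∂Π) ≤ ρ}. Then for every x ∈ D with d(x) ≥ 2ρ, ∫_{Π_ρ} |P(x,y)| dσ(y) ≤ C ρ / d(x), with C independent of x and ρ. -/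
open MeasureTheory Metric Set Filter Topology
open scoped RealInnerProductSpace ENNReal NNReal

/-!
Every point of the strip `Π_ρ` lies within `2ρ` of a point of the relative boundary of the face,
and such a point lies on another facet hyperplane `⟪ν j, ·⟫ = c j`. Hence the strip is covered by
finitely many slabs `{y | ⟪ν k, y⟫ = c k, |⟪ν j, y⟫ - c j| ≤ 2ρ}`, one per facet not parallel to
`Π`. The part of such a slab within distance `R` of `x` is a Lipschitz image of a box of volume
`O(ρ R^(d-2))`, so summing over the dyadic shells `2ⁿ d(x) ≤ |x - y| ≤ 2ⁿ⁺¹ d(x)` (every point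
of `Π` is at distance at least `d(x)` from `x`) gives `∫ |x - y|^(-d) = O(ρ / d(x)²)` on each
slab; the factor `d(x)` in the kernel bound then yields `O(ρ / d(x))`. The relative boundary is
nonempty because a nonempty bounded set that is open in a hyperplane of positive dimension is
not closed.
-/

section InnerProductSpace

variable {F : Type*} [NormedAddCommGroup F] [InnerProductSpace ℝ F]

theorem abs_inner_sub_inner_le_dist {u : F} (hu : ‖u‖ = 1) (y z : F) :
    |⟪u, y⟫ - ⟪u, z⟫| ≤ dist y z := by
  rw [← inner_sub_right, dist_eq_norm]
  exact (abs_real_inner_le_norm u _).trans_eq (by rw [hu, one_mul])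

theorem exists_orthonormalBasis_zero_one [FiniteDimensional ℝ F] {m : ℕ}
    (hF : Module.finrank ℝ F = m + 2) {n u : F} (hn : ‖n‖ = 1) (hu : ‖u‖ = 1) (hnu : ⟪n, u⟫ = 0) :
    ∃ B : OrthonormalBasis (Fin (m + 2)) ℝ F, B 0 = n ∧ B 1 = u := by
  set v : Fin (m + 2) → F := fun i => if i = 0 then n else u
  have hv : Orthonormal ℝ (({0, 1} : Set (Fin (m + 2))).domRestrict v) := by
    classical
    rw [orthonormal_iff_ite]
    rintro ⟨i, rfl | rfl⟩ ⟨j, rfl | rfl⟩ <;>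
      simp [v, Set.domRestrict, Subtype.ext_iff, hn, hu, hnu, real_inner_comm n u]
  obtain ⟨B, hB⟩ := hv.exists_orthonormalBasis_extension_of_card_eq (by simpa using hF)
  exact ⟨B, by simpa [v] using hB 0, by simpa [v] using hB 1⟩

theorem exists_ne_zero_inner_eq_zero [FiniteDimensional ℝ F] (hF : 2 ≤ Module.finrank ℝ F)
    (w : F) : ∃ v ≠ 0, ⟪w, v⟫ = 0 := by
  have hsum := (ℝ ∙ w).finrank_add_finrank_orthogonal
  have hw : Module.finrank ℝ (ℝ ∙ w) ≤ 1 := by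
    simpa using finrank_span_le_card (R := ℝ) ({w} : Set F)
  obtain ⟨v, hv⟩ :=
    Module.finrank_pos_iff_exists_ne_zero.1 (by omega : 0 < Module.finrank ℝ (ℝ ∙ w)ᗮ)
  exact ⟨v, by simpa using hv, Submodule.mem_orthogonal_singleton_iff_inner_right.1 v.2⟩

theorem Bornology.IsBounded.not_isClosed_of_isOpen_line {S : Set F} (hS : Bornology.IsBounded S)
    {y v : F} (hy : y ∈ S) (hv : v ≠ 0) (hopen : IsOpen {t : ℝ | y + t • v ∈ S}) :
    ¬ IsClosed S := by
  intro hclosed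
  have hline : {t : ℝ | y + t • v ∈ S} = univ :=
    IsClopen.eq_univ ⟨hclosed.preimage (by fun_prop), hopen⟩ ⟨0, by simpa using hy⟩
  obtain ⟨R, hR⟩ := isBounded_iff_forall_norm_le.1 hS
  set t := (R + ‖y‖ + 1) / ‖v‖
  have hnorm : ‖t • v‖ = R + ‖y‖ + 1 := by
    have : 0 ≤ R := (norm_nonneg y).trans (hR y hy)
    rw [norm_smul, Real.norm_eq_abs, abs_of_nonneg (by positivity),
      div_mul_cancel₀ _ (norm_ne_zero_iff.2 hv)]
  have hyt := hR (y + t • v) (eq_univ_iff_forall.1 hline t)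
  have := norm_sub_le (y + t • v) y
  rw [add_sub_cancel_left, hnorm] at this
  linarith

end InnerProductSpace

theorem lintegral_inv_dist_pow_le {X : Type*} [PseudoMetricSpace X] [MeasurableSpace X]
    (μ : Measure X) (s : Set X) (x : X) {m p : ℕ} (hmp : m < p) {A δ : ℝ} (hA : 0 ≤ A)
    (hδ : 0 < δ) (hμ : ∀ R, 0 < R → μ (s ∩ closedBall x R) ≤ ENNReal.ofReal (A * R ^ m)) :
    ∫⁻ y in s ∩ {y | δ ≤ dist x y}, ENNReal.ofReal ((dist x y ^ p)⁻¹) ∂μ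
      ≤ ENNReal.ofReal (2 ^ (m + 1) * A / δ ^ (p - m)) := by
  set shell : ℕ → Set X := fun n => s ∩ {y | 2 ^ n * δ ≤ dist x y ∧ dist x y ≤ 2 ^ (n + 1) * δ}
  have hcover : s ∩ {y | δ ≤ dist x y} ⊆ ⋃ n, shell n := by
    rintro y ⟨hys, hy⟩
    obtain ⟨n, hn, hn'⟩ := exists_nat_pow_near ((one_le_div hδ).2 hy) one_lt_two
    rw [le_div_iff₀ hδ] at hn
    rw [div_lt_iff₀ hδ] at hn'
    exact mem_iUnion.2 ⟨n, hys, hn, hn'.le⟩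
  set a : ℝ := 2 ^ m * A / δ ^ (p - m)
  have hshell (n : ℕ) : ∫⁻ y in shell n, ENNReal.ofReal ((dist x y ^ p)⁻¹) ∂μ
      ≤ ENNReal.ofReal (a * (1 / 2) ^ n) := by
    have h2n : (0 : ℝ) < 2 ^ n * δ := by positivity
    calc ∫⁻ y in shell n, ENNReal.ofReal ((dist x y ^ p)⁻¹) ∂μ
        ≤ ∫⁻ _ in shell n, ENNReal.ofReal (((2 ^ n * δ) ^ p)⁻¹) ∂μ :=
          setLIntegral_mono measurable_const fun y hy => ENNReal.ofReal_le_ofReal <|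
            inv_anti₀ (by positivity) (pow_le_pow_left₀ h2n.le hy.2.1 p)
      _ = ENNReal.ofReal (((2 ^ n * δ) ^ p)⁻¹) * μ (shell n) := setLIntegral_const _ _
      _ ≤ ENNReal.ofReal (((2 ^ n * δ) ^ p)⁻¹) * ENNReal.ofReal (A * (2 ^ (n + 1) * δ) ^ m) := by
          gcongr
          refine le_trans (measure_mono ?_) (hμ _ (by positivity))
          exact fun y hy => ⟨hy.1, mem_closedBall'.2 hy.2.2⟩
      _ = ENNReal.ofReal (((2 ^ n * δ) ^ p)⁻¹ * (A * (2 ^ (n + 1) * δ) ^ m)) :=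
          (ENNReal.ofReal_mul (by positivity)).symm
      _ ≤ ENNReal.ofReal (a * (1 / 2) ^ n) := by
          refine ENNReal.ofReal_le_ofReal ?_
          obtain ⟨q, rfl⟩ := Nat.exists_eq_add_of_lt hmp
          have hq : (2 : ℝ) ^ n ≤ (2 ^ n) ^ (q + 1) :=
            le_self_pow₀ (one_le_pow₀ one_le_two) (Nat.succ_ne_zero q)
          calc ((2 ^ n * δ) ^ (m + q + 1))⁻¹ * (A * (2 ^ (n + 1) * δ) ^ m)
              = 2 ^ m * A / δ ^ (q + 1) / (2 ^ n) ^ (q + 1) := by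
                rw [pow_succ 2 n]; field_simp; ring
            _ ≤ 2 ^ m * A / δ ^ (q + 1) / 2 ^ n := by gcongr
            _ = a * (1 / 2) ^ n := by
                simp only [a, one_div_pow, show m + q + 1 - m = q + 1 by omega]; ring
  calc ∫⁻ y in s ∩ {y | δ ≤ dist x y}, ENNReal.ofReal ((dist x y ^ p)⁻¹) ∂μ
      ≤ ∫⁻ y in ⋃ n, shell n, ENNReal.ofReal ((dist x y ^ p)⁻¹) ∂μ := lintegral_mono_set hcover
    _ ≤ ∑' n, ∫⁻ y in shell n, ENNReal.ofReal ((dist x y ^ p)⁻¹) ∂μ := lintegral_iUnion_le _ _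
    _ ≤ ∑' n : ℕ, ENNReal.ofReal (a * (1 / 2) ^ n) := ENNReal.tsum_le_tsum hshell
    _ = ENNReal.ofReal (2 ^ (m + 1) * A / δ ^ (p - m)) := by
        rw [← ENNReal.ofReal_tsum_of_nonneg (fun n => by positivity)
          ((summable_geometric_two).mul_left a), tsum_mul_left, tsum_geometric_two]
        congr 1
        ring

theorem integral_abs_le_of_ae_abs_le {X : Type*} [MeasurableSpace X] {μ : Measure X} {s : Set X}
    {f g : X → ℝ} {C₀ B : ℝ} (hf : ∀ᵐ y ∂μ.restrict s, |f y| ≤ C₀ * g y) (hg : ∀ y, 0 ≤ g y)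
    (hB0 : 0 ≤ B) (hB : ∫⁻ y in s, ENNReal.ofReal (g y) ∂μ ≤ ENNReal.ofReal B) :
    ∫ y in s, |f y| ∂μ ≤ max C₀ 0 * B := by
  have hlint : ∫⁻ y in s, ENNReal.ofReal ‖|f y|‖ ∂μ ≤ ENNReal.ofReal (max C₀ 0 * B) := by
    calc ∫⁻ y in s, ENNReal.ofReal ‖|f y|‖ ∂μ
        ≤ ∫⁻ y in s, ENNReal.ofReal (max C₀ 0) * ENNReal.ofReal (g y) ∂μ := by
          refine lintegral_mono_ae (hf.mono fun y hy => ?_)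
          rw [Real.norm_eq_abs, abs_abs, ← ENNReal.ofReal_mul (le_max_right _ _)]
          exact ENNReal.ofReal_le_ofReal (hy.trans (by gcongr; exacts [hg y, le_max_left _ _]))
      _ = ENNReal.ofReal (max C₀ 0) * ∫⁻ y in s, ENNReal.ofReal (g y) ∂μ :=
          lintegral_const_mul' _ _ ENNReal.ofReal_ne_top
      _ ≤ ENNReal.ofReal (max C₀ 0 * B) := by
          rw [ENNReal.ofReal_mul (le_max_right _ _)]
          gcongr
  calc ∫ y in s, |f y| ∂μ ≤ ‖∫ y in s, |f y| ∂μ‖ := Real.le_norm_self _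
    _ ≤ (∫⁻ y in s, ENNReal.ofReal ‖|f y|‖ ∂μ).toReal := norm_integral_le_lintegral_norm _
    _ ≤ max C₀ 0 * B := ENNReal.toReal_le_of_le_ofReal (by positivity) hlint

section Hyperplane

variable {F : Type*} [NormedAddCommGroup F] [InnerProductSpace ℝ F] [MeasurableSpace F]
  [BorelSpace F]

theorem OrthonormalBasis.hausdorffMeasure_setOf_inner_mem_le {m : ℕ}
    (B : OrthonormalBasis (Fin (m + 1)) ℝ F) (c : ℝ) (I : Fin m → Set ℝ) :
    μH[m] {y | ⟪B 0, y⟫ = c ∧ ∀ i, ⟪B i.succ, y⟫ ∈ I i} ≤ (m : ℝ≥0∞) ^ m * volume (univ.pi I) := by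
  set g : (Fin m → ℝ) → F := fun w => c • B 0 + ∑ i, w i • B i.succ
  have hg : LipschitzWith (m : ℝ≥0) g := by
    refine LipschitzWith.of_dist_le_mul fun w w' => ?_
    calc dist (g w) (g w') = ‖∑ i, (w i - w' i) • B i.succ‖ := by
          simp only [g, dist_eq_norm, sub_smul, Finset.sum_sub_distrib, add_sub_add_left_eq_sub]
      _ ≤ ∑ _i : Fin m, dist w w' := by
          refine (norm_sum_le _ _).trans (Finset.sum_le_sum fun i _ => ?_)
          rw [norm_smul, B.orthonormal.1, mul_one, ← dist_eq_norm]
          exact dist_le_pi_dist w w' i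
      _ = m * dist w w' := by simp
  have hcover : {y | ⟪B 0, y⟫ = c ∧ ∀ i, ⟪B i.succ, y⟫ ∈ I i} ⊆ g '' univ.pi I := by
    rintro y ⟨hy0, hyI⟩
    refine ⟨fun i => ⟪B i.succ, y⟫, fun i _ => hyI i, ?_⟩
    conv_rhs => rw [← B.sum_repr' y]
    simp [g, Fin.sum_univ_succ, hy0]
  calc μH[m] {y | ⟪B 0, y⟫ = c ∧ ∀ i, ⟪B i.succ, y⟫ ∈ I i}
      ≤ ((m : ℝ≥0) : ℝ≥0∞) ^ (m : ℝ) * μH[m] (univ.pi I) :=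
        (measure_mono hcover).trans (hg.hausdorffMeasure_image_le (Nat.cast_nonneg _) _)
    _ = (m : ℝ≥0∞) ^ m * volume (univ.pi I) := by
        rw [ENNReal.rpow_natCast, ENNReal.coe_natCast]
        simpa using congrArg (fun μ : Measure (Fin m → ℝ) => (m : ℝ≥0∞) ^ m * μ (univ.pi I))
          (hausdorffMeasure_pi_real (ι := Fin m))

theorem hausdorffMeasure_slab_inter_closedBall_le [FiniteDimensional ℝ F] {m : ℕ}
    (hF : Module.finrank ℝ F = m + 2) {n u : F} (hn : ‖n‖ = 1) (hu : ‖u‖ = 1) (hnu : ⟪n, u⟫ = 0)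
    (c b : ℝ) {ρ R : ℝ} (hρ : 0 ≤ ρ) (hR : 0 ≤ R) (x : F) :
    μH[m + 1] ({y | ⟪n, y⟫ = c ∧ |⟪u, y⟫ - b| ≤ ρ} ∩ closedBall x R)
      ≤ ENNReal.ofReal ((m + 1) ^ (m + 1) * 2 ^ (m + 1) * ρ * R ^ m) := by
  obtain ⟨B, rfl, rfl⟩ := exists_orthonormalBasis_zero_one hF hn hu hnu
  set I : Fin (m + 1) → Set ℝ := Fin.cons (Icc (b - ρ) (b + ρ))
    fun i => Icc (⟪B i.succ.succ, x⟫ - R) (⟪B i.succ.succ, x⟫ + R)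
  have hsub : {y | ⟪B 0, y⟫ = c ∧ |⟪B 1, y⟫ - b| ≤ ρ} ∩ closedBall x R
      ⊆ {y | ⟪B 0, y⟫ = c ∧ ∀ i, ⟪B i.succ, y⟫ ∈ I i} := by
    rintro y ⟨⟨hyc, hyb⟩, hyR⟩
    refine ⟨hyc, Fin.cases ?_ fun i => ?_⟩
    · exact mem_Icc_iff_abs_le.1 (by rwa [abs_sub_comm])
    · refine mem_Icc_iff_abs_le.1 ?_
      rw [abs_sub_comm]
      exact (abs_inner_sub_inner_le_dist (B.orthonormal.1 _) y x).trans (mem_closedBall.1 hyR)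
  calc μH[m + 1] ({y | ⟪B 0, y⟫ = c ∧ |⟪B 1, y⟫ - b| ≤ ρ} ∩ closedBall x R)
      ≤ ((m + 1 : ℕ) : ℝ≥0∞) ^ (m + 1) * volume (univ.pi I) := by
        simpa using (measure_mono hsub).trans (B.hausdorffMeasure_setOf_inner_mem_le c I)
    _ = ENNReal.ofReal ((m + 1) ^ (m + 1) * 2 ^ (m + 1) * ρ * R ^ m) := by
        have hρ' : b + ρ - (b - ρ) = 2 * ρ := by ring
        have hR' (t : ℝ) : t + R - (t - R) = 2 * R := by ring
        simp only [I, volume_pi_pi, Fin.prod_univ_succ, Fin.cons_zero, Fin.cons_succ,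
          Real.volume_Icc, hρ', hR', Finset.prod_const, Finset.card_univ, Fintype.card_fin]
        rw [← ENNReal.ofReal_pow (by positivity), ← ENNReal.ofReal_mul (by positivity),
          ← ENNReal.ofReal_natCast, ← ENNReal.ofReal_pow (by positivity),
          ← ENNReal.ofReal_mul (by positivity)]
        congr 1
        push_cast
        ring

theorem lintegral_slab_inv_dist_pow_le [FiniteDimensional ℝ F] {m : ℕ}
    (hF : Module.finrank ℝ F = m + 2) {n u : F} (hn : ‖n‖ = 1) (hu : u - ⟪n, u⟫ • n ≠ 0)
    (c b : ℝ) {ρ δ : ℝ} (hρ : 0 ≤ ρ) (hδ : 0 < δ) (x : F) :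
    ∫⁻ y in {y | ⟪n, y⟫ = c ∧ |⟪u, y⟫ - b| ≤ ρ} ∩ {y | δ ≤ dist x y},
        ENNReal.ofReal ((dist x y ^ (m + 2))⁻¹) ∂μH[m + 1]
      ≤ ENNReal.ofReal ((4 * (m + 1)) ^ (m + 1) * (ρ / ‖u - ⟪n, u⟫ • n‖) / δ ^ 2) := by
  set w := u - ⟪n, u⟫ • n
  have hw : 0 < ‖w‖ := norm_pos_iff.2 hu
  have hnw : ⟪n, ‖w‖⁻¹ • w⟫ = 0 := by
    simp [w, inner_sub_right, real_inner_smul_right, hn]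
  -- on the hyperplane `⟪n, y⟫ = c`, the functional `⟪u, ·⟫` only sees the component `w` of `u`
  have hslab : {y | ⟪n, y⟫ = c ∧ |⟪u, y⟫ - b| ≤ ρ} ⊆
      {y | ⟪n, y⟫ = c ∧ |⟪‖w‖⁻¹ • w, y⟫ - ‖w‖⁻¹ * (b - ⟪n, u⟫ * c)| ≤ ρ / ‖w‖} := by
    rintro y ⟨hyc, hyb⟩
    refine ⟨hyc, ?_⟩
    have : ⟪‖w‖⁻¹ • w, y⟫ - ‖w‖⁻¹ * (b - ⟪n, u⟫ * c) = (⟪u, y⟫ - b) / ‖w‖ := by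
      simp only [w, real_inner_smul_left, inner_sub_left, hyc]
      ring
    rw [this, abs_div, abs_of_pos hw]
    gcongr
  have hμ (R : ℝ) (hR : 0 < R) :
      μH[m + 1] ({y | ⟪n, y⟫ = c ∧ |⟪u, y⟫ - b| ≤ ρ} ∩ closedBall x R)
        ≤ ENNReal.ofReal ((m + 1) ^ (m + 1) * 2 ^ (m + 1) * (ρ / ‖w‖) * R ^ m) :=
    (measure_mono (inter_subset_inter_left _ hslab)).trans <|
      hausdorffMeasure_slab_inter_closedBall_le hF hn (by simp [norm_smul, hw.ne']) hnw c _
        (by positivity) hR.le x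
  convert lintegral_inv_dist_pow_le _ _ x (Nat.lt_add_of_pos_right two_pos) (by positivity) hδ hμ
    using 2
  rw [show m + 2 - m = 2 by omega, show (4 : ℝ) * (m + 1) = 2 * 2 * (m + 1) by ring, mul_pow,
    mul_pow]
  ring

end Hyperplane

section Polyhedron

variable {F : Type*} [NormedAddCommGroup F] [InnerProductSpace ℝ F] {ι : Type*}

def openPolyhedron (ν : ι → F) (c : ι → ℝ) : Set F := ⋂ j, {x | c j < ⟪ν j, x⟫}

def polyhedronFace (ν : ι → F) (c : ι → ℝ) (k : ι) : Set F :=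
  {x | ⟪ν k, x⟫ = c k} ∩ ⋂ j ∈ {j | j ≠ k}, {x | c j < ⟪ν j, x⟫}

variable (ν : ι → F) (c : ι → ℝ)

theorem exists_inner_eq_of_mem_closure_diff {k : ι} {z : F}
    (hz : z ∈ closure (polyhedronFace ν c k) \ polyhedronFace ν c k) :
    ⟪ν k, z⟫ = c k ∧ ∃ j ≠ k, ⟪ν j, z⟫ = c j := by
  set K := {x : F | ⟪ν k, x⟫ = c k} ∩ ⋂ j ∈ {j | j ≠ k}, {x | c j ≤ ⟪ν j, x⟫}
  have hsub : polyhedronFace ν c k ⊆ K := fun y hy =>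
    ⟨hy.1, mem_iInter₂.2 fun j hj => (mem_iInter₂.1 hy.2 j hj).out.le⟩
  have hK : IsClosed K := (isClosed_eq (by fun_prop) continuous_const).inter
    (isClosed_biInter fun _ _ => isClosed_le continuous_const (by fun_prop))
  obtain ⟨hzk, hzj⟩ := closure_minimal hsub hK hz.1
  refine ⟨hzk, ?_⟩
  by_contra! h
  exact hz.2 ⟨hzk, mem_iInter₂.2 fun j hj => (mem_iInter₂.1 hzj j hj).lt_of_ne (h j hj).symm⟩

variable [Finite ι]

theorem isOpen_openPolyhedron : IsOpen (openPolyhedron ν c) :=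
  isOpen_iInter_of_finite fun _ => isOpen_lt continuous_const (by fun_prop)

theorem isOpen_biInter_ne (k : ι) : IsOpen (⋂ j ∈ {j | j ≠ k}, {x : F | c j < ⟪ν j, x⟫}) :=
  (toFinite _).isOpen_biInter fun _ _ => isOpen_lt continuous_const (by fun_prop)

theorem polyhedronFace_subset_frontier {k : ι} (hk : ν k ≠ 0) :
    polyhedronFace ν c k ⊆ frontier (openPolyhedron ν c) := by
  rintro y ⟨hyk, hyU⟩
  rw [(isOpen_openPolyhedron ν c).frontier_eq]
  refine ⟨?_, fun hy => (mem_iInter.1 hy k).ne' hyk⟩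
  have hpath : Tendsto (fun t : ℝ => y + t • ν k) (𝓝 0) (𝓝 y) :=
    Continuous.tendsto' (by fun_prop) 0 y (by simp)
  refine mem_closure_of_tendsto (hpath.mono_left (nhdsWithin_le_nhds (s := Ioi 0))) ?_
  filter_upwards [nhdsWithin_le_nhds (hpath.eventually_mem
    ((isOpen_biInter_ne ν c k).mem_nhds hyU)), self_mem_nhdsWithin] with t htU ht
  refine mem_iInter.2 fun j => ?_
  rcases eq_or_ne j k with rfl | hj
  · have hyk : ⟪ν j, y⟫ = c j := hyk
    have : 0 < t * ⟪ν j, ν j⟫ := mul_pos ht (real_inner_self_pos.2 hk)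
    change c j < ⟪ν j, y + t • ν j⟫
    rw [inner_add_right, real_inner_smul_right, hyk]
    linarith
  · exact mem_iInter₂.1 htU j hj

theorem nonempty_closure_polyhedronFace_diff [FiniteDimensional ℝ F]
    (hF : 2 ≤ Module.finrank ℝ F) {k : ι} (hb : Bornology.IsBounded (polyhedronFace ν c k))
    (hne : (polyhedronFace ν c k).Nonempty) :
    (closure (polyhedronFace ν c k) \ polyhedronFace ν c k).Nonempty := by
  obtain ⟨y, hy⟩ := hne
  have hyk : ⟪ν k, y⟫ = c k := hy.1
  obtain ⟨v, hv, hkv⟩ := exists_ne_zero_inner_eq_zero hF (ν k)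
  rw [sdiff_nonempty, closure_subset_iff_isClosed]
  refine hb.not_isClosed_of_isOpen_line hy hv ?_
  have hline : {t : ℝ | y + t • v ∈ polyhedronFace ν c k}
      = {t : ℝ | y + t • v ∈ ⋂ j ∈ {j | j ≠ k}, {x : F | c j < ⟪ν j, x⟫}} := by
    ext t
    simp [polyhedronFace, inner_add_right, real_inner_smul_right, hkv, hyk]
  rw [hline]
  exact (isOpen_biInter_ne ν c k).preimage (by fun_prop)

end Polyhedron

theorem lintegral_polyhedronFace_strip_le {F : Type*} [NormedAddCommGroup F]
    [InnerProductSpace ℝ F] [FiniteDimensional ℝ F] [MeasurableSpace F] [BorelSpace F]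
    {ι : Type*} [Fintype ι] {m : ℕ} (hF : Module.finrank ℝ F = m + 2) {ν : ι → F} {c : ι → ℝ}
    (hν : ∀ j, ‖ν j‖ = 1) {k : ι} (hb : Bornology.IsBounded (polyhedronFace ν c k)) {x : F}
    {ρ δ : ℝ} (hρ : 0 < ρ) (hδ : 0 < δ) (hx : ∀ y ∈ polyhedronFace ν c k, δ ≤ dist x y) :
    ∫⁻ y in {y ∈ polyhedronFace ν c k |
        infDist y (closure (polyhedronFace ν c k) \ polyhedronFace ν c k) ≤ ρ},
        ENNReal.ofReal ((dist x y ^ (m + 2))⁻¹) ∂μH[m + 1]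
      ≤ ENNReal.ofReal
        ((∑ j, 2 * (4 * (m + 1)) ^ (m + 1) / ‖ν j - ⟪ν k, ν j⟫ • ν k‖) * ρ / δ ^ 2) := by
  classical
  set face := polyhedronFace ν c k
  set w : ι → F := fun j => ν j - ⟪ν k, ν j⟫ • ν k
  set T : ι → Set F := fun j => if w j = 0 then ∅ else
    {y | ⟪ν k, y⟫ = c k ∧ |⟪ν j, y⟫ - c j| ≤ 2 * ρ} ∩ {y | δ ≤ dist x y}
  have hcover : {y ∈ face | infDist y (closure face \ face) ≤ ρ} ⊆ ⋃ j, T j := by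
    rintro y ⟨hy, hyρ⟩
    have hne := nonempty_closure_polyhedronFace_diff ν c (by omega) hb ⟨y, hy⟩
    obtain ⟨z, hz, hyz⟩ := (infDist_lt_iff hne).1 (hyρ.trans_lt (by linarith : ρ < 2 * ρ))
    obtain ⟨hzk, j, hjk, hzj⟩ := exists_inner_eq_of_mem_closure_diff ν c hz
    have hyk : ⟪ν k, y⟫ = c k := hy.1
    have hyj : c j < ⟪ν j, y⟫ := mem_iInter₂.1 hy.2 j hjk
    -- if `ν j` were parallel to `ν k`, `⟪ν j, ·⟫` would be constant on the hyperplane of the face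
    have hwj : w j ≠ 0 := by
      intro h0
      have := congrArg (fun v => ⟪v, y - z⟫) (sub_eq_zero.1 h0)
      simp only [inner_sub_right, real_inner_smul_left, hyk, hzk, hzj, sub_self] at this
      linarith
    refine mem_iUnion.2 ⟨j, ?_⟩
    simp only [T, if_neg hwj]
    refine ⟨⟨hyk, ?_⟩, hx y hy⟩
    rw [← hzj]
    linarith [abs_inner_sub_inner_le_dist (hν j) y z]
  have hT (j : ι) : ∫⁻ y in T j, ENNReal.ofReal ((dist x y ^ (m + 2))⁻¹) ∂μH[m + 1]
      ≤ ENNReal.ofReal (2 * (4 * (m + 1)) ^ (m + 1) / ‖w j‖ * ρ / δ ^ 2) := by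
    by_cases hwj : w j = 0
    · simp [T, hwj]
    · simp only [T, if_neg hwj]
      convert lintegral_slab_inv_dist_pow_le hF (hν k) hwj (c k) (c j) (by positivity : 0 ≤ 2 * ρ)
        hδ x using 2
      ring
  calc ∫⁻ y in {y ∈ face | infDist y (closure face \ face) ≤ ρ},
        ENNReal.ofReal ((dist x y ^ (m + 2))⁻¹) ∂μH[m + 1]
      ≤ ∑' j, ∫⁻ y in T j, ENNReal.ofReal ((dist x y ^ (m + 2))⁻¹) ∂μH[m + 1] :=
        (lintegral_mono_set hcover).trans (lintegral_iUnion_le _ _)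
    _ ≤ ∑ j, ENNReal.ofReal (2 * (4 * (m + 1)) ^ (m + 1) / ‖w j‖ * ρ / δ ^ 2) := by
        rw [tsum_fintype]
        exact Finset.sum_le_sum fun j _ => hT j
    _ = _ := by
        rw [← ENNReal.ofReal_sum_of_nonneg fun j _ => by positivity, Finset.sum_mul,
          Finset.sum_div]

theorem stmt6_general (d : ℕ) (hd : 2 ≤ d) (N : ℕ)
    (ν : Fin N → EuclideanSpace ℝ (Fin d)) (c : Fin N → ℝ) (hν : ∀ j, ‖ν j‖ = 1)
    (D : Set (EuclideanSpace ℝ (Fin d)))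
    (hD : D = ⋂ j, {x | c j < ⟪ν j, x⟫})
    (hDb : Bornology.IsBounded D)
    (k : Fin N) (Pi' : Set (EuclideanSpace ℝ (Fin d)))
    (hPi : Pi' = {x | ⟪ν k, x⟫ = c k} ∩ ⋂ j ∈ {j | j ≠ k}, {x | c j < ⟪ν j, x⟫})
    (P : EuclideanSpace ℝ (Fin d) → EuclideanSpace ℝ (Fin d) → ℝ) (C₀ : ℝ)
    (hP : ∀ x ∈ D, ∀ᵐ y ∂((μH[(d:ℝ) - 1]).restrict Pi'),
      |P x y| ≤ C₀ * infDist x (frontier D) / dist x y ^ d) :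
    ∃ C : ℝ, ∀ ρ : ℝ, 0 < ρ → ∀ x ∈ D, 2 * ρ ≤ infDist x (frontier D) →
      ∫ y in {y ∈ Pi' | infDist y (closure Pi' \ Pi') ≤ ρ}, |P x y| ∂(μH[(d:ℝ) - 1])
        ≤ C * ρ / infDist x (frontier D) := by
  obtain ⟨m, rfl⟩ : ∃ m, d = m + 2 := ⟨d - 2, by omega⟩
  rw [show ((m + 2 : ℕ) : ℝ) - 1 = m + 1 by push_cast; ring] at hP ⊢
  change D = openPolyhedron ν c at hD
  change Pi' = polyhedronFace ν c k at hPi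
  subst hD hPi
  have hfr := polyhedronFace_subset_frontier ν c (norm_ne_zero_iff.1 ((hν k).trans_ne one_ne_zero))
  have hb : Bornology.IsBounded (polyhedronFace ν c k) :=
    hDb.closure.subset (hfr.trans frontier_subset_closure)
  set K := ∑ j, 2 * (4 * (m + 1 : ℝ)) ^ (m + 1) / ‖ν j - ⟪ν k, ν j⟫ • ν k‖
  refine ⟨max C₀ 0 * K, fun ρ hρ x hx hρx => ?_⟩
  set δ := infDist x (frontier (openPolyhedron ν c))
  have hδ : 0 < δ := by linarith
  have hstrip := lintegral_polyhedronFace_strip_le finrank_euclideanSpace_fin hν hb hρ hδ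
    fun y hy => infDist_le_dist_of_mem (hfr hy)
  calc _ ≤ max (C₀ * δ) 0 * (K * ρ / δ ^ 2) :=
        integral_abs_le_of_ae_abs_le
          (ae_restrict_of_ae_restrict_of_subset (sep_subset _ _) ((hP x hx).mono fun y hy => by
            rwa [← div_eq_mul_inv]))
          (fun y => by positivity) (by positivity) hstrip
    _ = max C₀ 0 * K * ρ / δ := by
        rw [show max (C₀ * δ) 0 = max C₀ 0 * δ by rw [max_mul_of_nonneg _ _ hδ.le, zero_mul]]
        field_simp

/-- If the Poisson kernel on a face Π of a bounded convex polygonal domain D (of diameter ≤ 1)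
satisfies |P(x,y)| ≤ C₀ d(x)/|x−y|^d for a.e. y ∈ Π, then the integral of |P(x,·)| over the
ρ-strip Π_ρ near the relative boundary of Π is bounded by C ρ/d(x), for all x ∈ D with
d(x) ≥ 2ρ, with C independent of x and ρ. -/
theorem stmt6 (d : ℕ) (hd : 2 ≤ d) (N : ℕ)
    (ν : Fin N → EuclideanSpace ℝ (Fin d)) (c : Fin N → ℝ) (hν : ∀ j, ‖ν j‖ = 1)
    (D : Set (EuclideanSpace ℝ (Fin d)))
    (hD : D = ⋂ j, {x | c j < ⟪ν j, x⟫})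
    (hDb : Bornology.IsBounded D) (hDne : D.Nonempty) (hdiam : Metric.diam D ≤ 1)
    (k : Fin N) (Pi' : Set (EuclideanSpace ℝ (Fin d)))
    (hPi : Pi' = {x | ⟪ν k, x⟫ = c k} ∩ ⋂ j ∈ {j | j ≠ k}, {x | c j < ⟪ν j, x⟫})
    (P : EuclideanSpace ℝ (Fin d) → EuclideanSpace ℝ (Fin d) → ℝ) (C₀ : ℝ)
    (hP : ∀ x ∈ D, ∀ᵐ y ∂((μH[(d:ℝ) - 1]).restrict Pi'),
      |P x y| ≤ C₀ * infDist x (frontier D) / dist x y ^ d) :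
    ∃ C : ℝ, ∀ ρ : ℝ, 0 < ρ → ∀ x ∈ D, 2 * ρ ≤ infDist x (frontier D) →
      ∫ y in {y ∈ Pi' | infDist y (closure Pi' \ Pi') ≤ ρ}, |P x y| ∂(μH[(d:ℝ) - 1])
        ≤ C * ρ / infDist x (frontier D) :=
  stmt6_general d hd N ν c hν D hD hDb k Pi' hPi P C₀ hP
end

section
/- Let D be a bounded convex polygon in ℝ^d written as D = ⋂_{j=1}^N {x : ν_j · x > c_j} with unit normals ν_j, and let Π be a (d−1)-dimensional face of D lying in {ν · x = c} with ν_k ≠ 0 for some fixed k. Then for every small ρ > 0 there exist finitely many measurable sets Γ₁,...,Γ_M ⊂ Π with pairwise disjoint relative interiors and a measurable set E ⊂ Π such that: (i) E ⊂ {y ∈ Π : dist(y, ∂Π) ≤ c₀ ρ} for a constant c₀ independent of ρ; (ii) Π \ E = ⋃_j Γ_j and each projection π_k(Γ_j) is a (d−1)-dimensional cube of side length ρ with vertices in the lattice π_k(ρ ℤ^d); (iii) c₁ ρ^{d−1} ≤ H^{d−1}(Γ_j) ≤ c₂ ρ^{d−1} and c₁ ρ ≤ diam(Γ_j) ≤ c₂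 ρ, with c₁, c₂ independent of ρ. -/
/-!
The hyperplane `{⟪ν, x⟫ = a}` containing the face is the graph of an affine map over the
coordinates other than `k`, because `x ↦ (coordinates ≠ k of x, ⟪ν, x⟫)` is a linear isomorphism
when `ν k ≠ 0`. Lifting the lattice cubes of side `ρ` that fit inside the projection of the face
along this graph gives the tiles: their Hausdorff measure and diameter are comparable to those of
the cubes, since the lift is Lipschitz and has the 1-Lipschitz coordinate projection as a left
inverse, and distinct cubes overlap in a null set. A point of the face outside every tile projects
into a lattice cube leaving the projection of the face; lifting a point of that cube outside it
gives a point of the hyperplane off the face within distance `Lρ` (`L` the Lipschitz constant of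
the lift), and the segment joining the two crosses the relative boundary of the face.
-/

open MeasureTheory Metric Bornology Set Function Filter Topology
open scoped RealInnerProductSpace NNReal

namespace FaceTiling

theorem hausdorffMeasure_le_image_of_leftInverse {X Y : Type*} [EMetricSpace X]
    [EMetricSpace Y] [MeasurableSpace X] [BorelSpace X] [MeasurableSpace Y] [BorelSpace Y]
    {f : X → Y} {g : Y → X} (hg : LipschitzWith 1 g) (hgf : LeftInverse g f)
    {r : ℝ} (hr : 0 ≤ r) (s : Set X) : μH[r] s ≤ μH[r] (f '' s) := by
  simpa [hgf.image_image] using hg.hausdorffMeasure_image_le hr (f '' s)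

theorem diam_le_image_of_leftInverse {X Y : Type*} [PseudoMetricSpace X] [PseudoMetricSpace Y]
    {f : X → Y} {g : Y → X} (hg : LipschitzWith 1 g) (hgf : LeftInverse g f) {s : Set X}
    (hs : IsBounded (f '' s)) : diam s ≤ diam (f '' s) := by
  simpa [hgf.image_image] using hg.diam_image_le (f '' s) hs

theorem infDist_closure_inter_diff_le_dist {E : Type*} [NormedAddCommGroup E] [NormedSpace ℝ E]
    {H O : Set E} (hH : Convex ℝ H) (hO : IsOpen O) {y w : E} (hy : y ∈ H ∩ O)
    (hw : w ∈ H \ O) : infDist y (closure (H ∩ O) \ (H ∩ O)) ≤ dist y w := by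
  obtain ⟨p, hpS, hp⟩ : ∃ p ∈ segment ℝ y w, p ∈ closure (H ∩ O) \ (H ∩ O) := by
    by_contra! hno
    have h : ∀ p ∈ segment ℝ y w, p ∈ closure (H ∩ O) → p ∈ H ∩ O :=
      fun p hp hc => by_contra fun hn => hno p hp ⟨hc, hn⟩
    -- otherwise `O` and the complement of `closure (H ∩ O)` would disconnect the segment
    have hcover : segment ℝ y w ⊆ O ∪ (closure (H ∩ O))ᶜ := fun p hp =>
      or_iff_not_imp_right.2 fun hc => (h p hp (not_not.1 hc)).2
    obtain ⟨p, hpS, hpO, hpc⟩ := (convex_segment y w).isPreconnected _ _ hO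
      isClosed_closure.isOpen_compl hcover ⟨y, left_mem_segment ℝ y w, hy.2⟩
      ⟨w, right_mem_segment ℝ y w, fun hc => hw.2 (h w (right_mem_segment ℝ y w) hc).2⟩
    exact hpc (subset_closure ⟨hH.segment_subset hy.1 hw.1 hpS, hpO⟩)
  calc infDist y (closure (H ∩ O) \ (H ∩ O)) ≤ dist y p := infDist_le_dist_of_mem hp
    _ ≤ dist y w := by
      rw [← dist_add_dist_of_mem_segment hpS]
      exact le_add_of_nonneg_right dist_nonneg

theorem face_subset_closure {ι E : Type*} [Finite ι] [NormedAddCommGroup E]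
    [InnerProductSpace ℝ E] {ν : ι → E} {c : ι → ℝ} {j₀ : ι} (hν : ν j₀ ≠ 0) :
    {x | ⟪ν j₀, x⟫ = c j₀} ∩ ⋂ j ∈ {j | j ≠ j₀}, {x | c j < ⟪ν j, x⟫} ⊆
      closure (⋂ j, {x | c j < ⟪ν j, x⟫}) := by
  rintro x ⟨hx₀ : ⟪ν j₀, x⟫ = c j₀, hx⟩
  have hlim : Tendsto (fun t : ℝ => x + t • ν j₀) (𝓝[>] 0) (𝓝 x) := by
    have h : Continuous fun t : ℝ => x + t • ν j₀ := by fun_prop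
    simpa using (h.tendsto 0).mono_left nhdsWithin_le_nhds
  refine mem_closure_of_tendsto hlim ?_
  simp only [mem_iInter]
  refine eventually_all.2 fun j => ?_
  by_cases hj : j = j₀
  · subst hj
    filter_upwards [self_mem_nhdsWithin] with t (ht : 0 < t)
    have : 0 < ⟪ν j, ν j⟫ := real_inner_self_pos.2 hν
    show c j < ⟪ν j, x + t • ν j⟫
    rw [inner_add_right, inner_smul_right, hx₀]
    nlinarith
  · have hcont : Continuous fun t : ℝ => ⟪ν j, x + t • ν j₀⟫ := by fun_prop
    have h0 : c j < ⟪ν j, x + (0 : ℝ) • ν j₀⟫ := by simpa using mem_iInter₂.1 hx j hj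
    exact nhdsWithin_le_nhds ((hcont.tendsto 0).eventually (lt_mem_nhds h0))

section LatticeCube

variable {ι : Type*} {ρ : ℝ}

def latticeCube (ρ : ℝ) (z : ι → ℤ) : Set (ι → ℝ) :=
  univ.pi fun i => Icc (ρ * z i) (ρ * z i + ρ)

theorem isCompact_latticeCube (ρ : ℝ) (z : ι → ℤ) : IsCompact (latticeCube ρ z) :=
  isCompact_univ_pi fun _ => isCompact_Icc

theorem mem_latticeCube_floor (hρ : 0 < ρ) (u : ι → ℝ) :
    u ∈ latticeCube ρ (fun i => ⌊u i / ρ⌋) := fun i _ => by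
  constructor
  · nlinarith [Int.floor_le (u i / ρ), mul_div_cancel₀ (u i) hρ.ne']
  · nlinarith [Int.lt_floor_add_one (u i / ρ), mul_div_cancel₀ (u i) hρ.ne']

variable [Fintype ι]

theorem dist_le_of_mem_latticeCube (hρ : 0 ≤ ρ) {z : ι → ℤ} {u v : ι → ℝ}
    (hu : u ∈ latticeCube ρ z) (hv : v ∈ latticeCube ρ z) : dist u v ≤ ρ :=
  (dist_pi_le_iff hρ).2 fun i =>
    (Real.dist_le_of_mem_Icc (hu i trivial) (hv i trivial)).trans_eq (by ring)

theorem diam_latticeCube [Nonempty ι] (hρ : 0 ≤ ρ) (z : ι → ℤ) :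
    diam (latticeCube ρ z) = ρ := by
  refine le_antisymm (diam_le_of_forall_dist_le hρ fun u hu v hv =>
    dist_le_of_mem_latticeCube hρ hu hv) ?_
  obtain ⟨i⟩ := ‹Nonempty ι›
  have hne : (latticeCube ρ z).Nonempty :=
    univ_pi_nonempty_iff.2 fun i => nonempty_Icc.2 (by linarith)
  calc ρ = diam (Icc (ρ * z i) (ρ * z i + ρ)) := by rw [Real.diam_Icc (by linarith)]; ring
    _ = diam (eval i '' latticeCube ρ z) := by rw [latticeCube, eval_image_univ_pi hne]
    _ ≤ 1 * diam (latticeCube ρ z) :=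
      (LipschitzWith.eval i).diam_image_le _ (isCompact_latticeCube ρ z).isBounded
    _ = diam (latticeCube ρ z) := one_mul _

theorem hausdorffMeasure_latticeCube (z : ι → ℤ) :
    μH[Fintype.card ι] (latticeCube ρ z) = ENNReal.ofReal ρ ^ Fintype.card ι := by
  rw [hausdorffMeasure_pi_real, latticeCube, volume_pi_pi]
  simp [Real.volume_Icc]

theorem hausdorffMeasure_latticeCube_inter (hρ : 0 ≤ ρ) {z z' : ι → ℤ} (hz : z ≠ z') :
    μH[Fintype.card ι] (latticeCube ρ z ∩ latticeCube ρ z') = 0 := by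
  obtain ⟨i, hi⟩ := Function.ne_iff.1 hz
  rw [hausdorffMeasure_pi_real, latticeCube, latticeCube, ← pi_inter_distrib, volume_pi_pi]
  refine Finset.prod_eq_zero (Finset.mem_univ i) ?_
  rw [Icc_inter_Icc, Real.volume_Icc, ENNReal.ofReal_eq_zero, sub_nonpos]
  -- distinct integers differ by at least one, so the two edges overlap in at most a point
  rcases hi.lt_or_gt with h | h
  · have h' : (z i : ℝ) + 1 ≤ z' i := by exact_mod_cast h
    exact inf_le_left.trans (le_sup_of_le_right (by nlinarith))
  · have h' : (z' i : ℝ) + 1 ≤ z i := by exact_mod_cast h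
    exact inf_le_right.trans (le_sup_of_le_left (by nlinarith))

theorem finite_setOf_latticeCube_subset {s : Set (ι → ℝ)} (hs : IsBounded s) (hρ : 0 < ρ) :
    {z | latticeCube ρ z ⊆ s}.Finite := by
  classical
  obtain ⟨R, hR⟩ := hs.subset_closedBall 0
  refine (Set.finite_Icc (fun _ => -⌈R / ρ⌉) fun _ => ⌈R / ρ⌉).subset fun z hz => ?_
  have hcorner : (fun i => ρ * z i) ∈ latticeCube ρ z := fun i _ => ⟨le_rfl, by linarith⟩
  have hnorm := mem_closedBall_zero_iff.1 (hR (hz hcorner))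
  have hbound : ∀ i, |(z i : ℝ)| ≤ ⌈R / ρ⌉ := fun i => by
    have h := (norm_le_pi_norm (fun i => ρ * (z i : ℝ)) i).trans hnorm
    rw [Real.norm_eq_abs, abs_mul, abs_of_pos hρ, ← le_div_iff₀' hρ] at h
    exact h.trans (Int.le_ceil _)
  exact ⟨fun i => by exact_mod_cast (abs_le.1 (hbound i)).1,
    fun i => by exact_mod_cast (abs_le.1 (hbound i)).2⟩

end LatticeCube

noncomputable section HyperplaneGraph

variable {d : ℕ}

def dropCoord (k : Fin d) : EuclideanSpace ℝ (Fin d) →L[ℝ] ({i // i ≠ k} → ℝ) :=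
  ContinuousLinearMap.pi fun i => EuclideanSpace.proj (i : Fin d)

@[simp] theorem dropCoord_apply (k : Fin d) (x : EuclideanSpace ℝ (Fin d)) (i : {i // i ≠ k}) :
    dropCoord k x i = x i := rfl

theorem lipschitzWith_dropCoord (k : Fin d) : LipschitzWith 1 (dropCoord k) :=
  LipschitzWith.of_dist_le_mul fun x y => by
    rw [NNReal.coe_one, one_mul, dist_eq_norm, dist_eq_norm, ← map_sub]
    exact (pi_norm_le_iff_of_nonneg (norm_nonneg _)).2 fun i => PiLp.norm_apply_le (x - y) i

theorem card_subtype_ne_eq (k : Fin d) : Fintype.card {i // i ≠ k} = d - 1 := by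
  simp [Fintype.card_subtype_compl]

theorem natCast_card_subtype_ne_eq (k : Fin d) : (Fintype.card {i // i ≠ k} : ℝ) = d - 1 := by
  rw [card_subtype_ne_eq, Nat.cast_sub k.pos, Nat.cast_one]

def faceChart (ν : EuclideanSpace ℝ (Fin d)) (k : Fin d) :
    EuclideanSpace ℝ (Fin d) →L[ℝ] ({i // i ≠ k} → ℝ) × ℝ :=
  (dropCoord k).prod (innerSL ℝ ν)

variable {ν : EuclideanSpace ℝ (Fin d)} {k : Fin d}

theorem faceChart_bijective (hk : ν k ≠ 0) : Bijective (faceChart ν k) := by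
  have hinj : Injective (faceChart ν k) := by
    rw [← ContinuousLinearMap.coe_coe, ← LinearMap.ker_eq_bot, LinearMap.ker_eq_bot']
    intro x hx
    simp only [ContinuousLinearMap.coe_coe, faceChart, ContinuousLinearMap.prod_apply,
      Prod.mk_eq_zero, innerSL_apply_apply] at hx
    have hoff : ∀ i, i ≠ k → x i = 0 := fun i hi => congr_fun hx.1 ⟨i, hi⟩
    have hxk : ν k * x k = 0 := by
      rw [← hx.2, PiLp.inner_apply, Finset.sum_eq_single k (fun i _ hi => by simp [hoff i hi])
        (by simp)]
      simp [mul_comm]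
    ext i
    by_cases hi : i = k
    · subst hi; simpa [hk] using hxk
    · simpa using hoff i hi
  refine ⟨hinj, (LinearMap.injective_iff_surjective_of_finrank_eq_finrank ?_).1 hinj⟩
  have : 1 ≤ d := k.pos
  simp [Module.finrank_prod]
  omega

def faceChartEquiv (hk : ν k ≠ 0) : EuclideanSpace ℝ (Fin d) ≃L[ℝ] ({i // i ≠ k} → ℝ) × ℝ :=
  (LinearEquiv.ofBijective (faceChart ν k : _ →ₗ[ℝ] _)
    (faceChart_bijective hk)).toContinuousLinearEquiv

def hyperplaneGraph (hk : ν k ≠ 0) (a : ℝ) (u : {i // i ≠ k} → ℝ) : EuclideanSpace ℝ (Fin d) :=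
  (faceChartEquiv hk).symm (u, a)

variable (hk : ν k ≠ 0) (a : ℝ)

theorem faceChart_hyperplaneGraph (u : {i // i ≠ k} → ℝ) :
    (dropCoord k (hyperplaneGraph hk a u), ⟪ν, hyperplaneGraph hk a u⟫) = (u, a) :=
  (faceChartEquiv hk).apply_symm_apply (u, a)

theorem leftInverse_dropCoord_hyperplaneGraph :
    LeftInverse (dropCoord k) (hyperplaneGraph hk a) := fun u =>
  congr_arg Prod.fst (faceChart_hyperplaneGraph hk a u)

theorem inner_hyperplaneGraph (u : {i // i ≠ k} → ℝ) : ⟪ν, hyperplaneGraph hk a u⟫ = a :=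
  congr_arg Prod.snd (faceChart_hyperplaneGraph hk a u)

theorem hyperplaneGraph_apply_of_ne (u : {i // i ≠ k} → ℝ) {i : Fin d} (hi : i ≠ k) :
    hyperplaneGraph hk a u i = u ⟨i, hi⟩ :=
  congr_fun (leftInverse_dropCoord_hyperplaneGraph hk a u) ⟨i, hi⟩

theorem hyperplaneGraph_dropCoord {x : EuclideanSpace ℝ (Fin d)} (hx : ⟪ν, x⟫ = a) :
    hyperplaneGraph hk a (dropCoord k x) = x := by
  rw [← hx]
  exact (faceChartEquiv hk).symm_apply_apply x

theorem exists_lipschitzWith_hyperplaneGraph :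
    ∃ L : ℝ≥0, 1 ≤ L ∧ LipschitzWith L (hyperplaneGraph hk a) := by
  have hsection : Isometry fun u : {i // i ≠ k} → ℝ => (u, a) :=
    Isometry.of_dist_eq fun u v => by simp [Prod.dist_eq]
  obtain ⟨L, hL⟩ : ∃ L, LipschitzWith L (faceChartEquiv hk).symm :=
    ⟨_, (faceChartEquiv hk).symm.lipschitz⟩
  exact ⟨max L 1, le_max_right _ _,
    (hL.comp hsection.lipschitz).weaken (by rw [mul_one]; exact le_max_left _ _)⟩

end HyperplaneGraph

section FaceTile

variable {d : ℕ} {ν : EuclideanSpace ℝ (Fin d)} {k : Fin d} (hk : ν k ≠ 0) (a : ℝ) {ρ : ℝ}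
  {L : ℝ≥0}

def faceTile (ρ : ℝ) (z : {i // i ≠ k} → ℤ) : Set (EuclideanSpace ℝ (Fin d)) :=
  hyperplaneGraph hk a '' latticeCube ρ z

theorem isCompact_faceTile (hL : LipschitzWith L (hyperplaneGraph hk a)) (z : {i // i ≠ k} → ℤ) :
    IsCompact (faceTile hk a ρ z) :=
  (isCompact_latticeCube ρ z).image hL.continuous

theorem ofReal_pow_le_hausdorffMeasure_faceTile (hρ : 0 ≤ ρ) (z : {i // i ≠ k} → ℤ) :
    ENNReal.ofReal (ρ ^ (d - 1)) ≤ μH[(d : ℝ) - 1] (faceTile hk a ρ z) := by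
  rw [← natCast_card_subtype_ne_eq k, ← card_subtype_ne_eq k, ENNReal.ofReal_pow hρ,
    ← hausdorffMeasure_latticeCube z]
  exact hausdorffMeasure_le_image_of_leftInverse (lipschitzWith_dropCoord k)
    (leftInverse_dropCoord_hyperplaneGraph hk a) (Nat.cast_nonneg _) (latticeCube ρ z)

theorem hausdorffMeasure_faceTile_le (hL : LipschitzWith L (hyperplaneGraph hk a)) (hρ : 0 ≤ ρ)
    (z : {i // i ≠ k} → ℤ) :
    μH[(d : ℝ) - 1] (faceTile hk a ρ z) ≤ ENNReal.ofReal (L ^ (d - 1) * ρ ^ (d - 1)) := by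
  have h := hL.hausdorffMeasure_image_le (Nat.cast_nonneg (Fintype.card {i // i ≠ k}))
    (latticeCube ρ z)
  rw [hausdorffMeasure_latticeCube, ENNReal.rpow_natCast, natCast_card_subtype_ne_eq,
    card_subtype_ne_eq] at h
  rwa [ENNReal.ofReal_mul (by positivity), ENNReal.ofReal_pow L.coe_nonneg,
    ENNReal.ofReal_pow hρ, ENNReal.ofReal_coe_nnreal]

theorem hausdorffMeasure_faceTile_inter (hL : LipschitzWith L (hyperplaneGraph hk a))
    (hρ : 0 ≤ ρ) {z z' : {i // i ≠ k} → ℤ} (hz : z ≠ z') :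
    μH[(d : ℝ) - 1] (faceTile hk a ρ z ∩ faceTile hk a ρ z') = 0 := by
  have h := hL.hausdorffMeasure_image_le (Nat.cast_nonneg (Fintype.card {i // i ≠ k}))
    (latticeCube ρ z ∩ latticeCube ρ z')
  rw [hausdorffMeasure_latticeCube_inter hρ hz, mul_zero, natCast_card_subtype_ne_eq,
    image_inter (leftInverse_dropCoord_hyperplaneGraph hk a).injective] at h
  exact le_antisymm h zero_le

theorem le_diam_faceTile (hd : 2 ≤ d) (hL : LipschitzWith L (hyperplaneGraph hk a))
    (hρ : 0 ≤ ρ) (z : {i // i ≠ k} → ℤ) : ρ ≤ diam (faceTile hk a ρ z) := by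
  have : Nonempty {i // i ≠ k} := by
    rw [← Fintype.card_pos_iff, card_subtype_ne_eq]
    omega
  exact (diam_latticeCube hρ z).symm.trans_le <|
    diam_le_image_of_leftInverse (lipschitzWith_dropCoord k)
      (leftInverse_dropCoord_hyperplaneGraph hk a) (isCompact_faceTile hk a hL z).isBounded

theorem diam_faceTile_le (hL : LipschitzWith L (hyperplaneGraph hk a)) (hρ : 0 ≤ ρ)
    (z : {i // i ≠ k} → ℤ) : diam (faceTile hk a ρ z) ≤ L * ρ :=
  diam_le_of_forall_dist_le (by positivity) <| by
    rintro _ ⟨u, hu, rfl⟩ _ ⟨v, hv, rfl⟩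
    exact (hL.dist_le_mul u v).trans
      (mul_le_mul_of_nonneg_left (dist_le_of_mem_latticeCube hρ hu hv) L.coe_nonneg)

theorem exists_image_update_faceTile_eq (z : {i // i ≠ k} → ℤ) :
    ∃ z' : Fin d → ℤ, (fun x : EuclideanSpace ℝ (Fin d) =>
        (WithLp.toLp 2 (Function.update x k 0) : EuclideanSpace ℝ (Fin d))) '' faceTile hk a ρ z
      = {x : EuclideanSpace ℝ (Fin d) | x k = 0 ∧
          ∀ i, i ≠ k → x i ∈ Set.Icc (ρ * z' i) (ρ * z' i + ρ)} := by
  refine ⟨fun i => if hi : i = k then 0 else z ⟨i, hi⟩, Set.ext fun x => ⟨?_, ?_⟩⟩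
  · rintro ⟨_, ⟨u, hu, rfl⟩, rfl⟩
    refine ⟨by simp, fun i hi => ?_⟩
    simpa [hi, hyperplaneGraph_apply_of_ne hk a u hi] using hu ⟨i, hi⟩ trivial
  · rintro ⟨hxk, hx⟩
    refine ⟨_, ⟨dropCoord k x, fun i _ => by simpa [i.2] using hx i i.2, rfl⟩, ?_⟩
    ext i
    by_cases hi : i = k
    · simp [hi, hxk]
    · simp [hi, hyperplaneGraph_apply_of_ne hk a _ hi]

variable {P : Set (EuclideanSpace ℝ (Fin d))} (hP : P ⊆ {x | ⟪ν, x⟫ = a})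
include hP

theorem faceTile_subset {z : {i // i ≠ k} → ℤ} (hz : latticeCube ρ z ⊆ dropCoord k '' P) :
    faceTile hk a ρ z ⊆ P := by
  rintro _ ⟨u, hu, rfl⟩
  obtain ⟨x, hx, rfl⟩ := hz hu
  rwa [hyperplaneGraph_dropCoord hk a (hP hx)]

theorem exists_dist_le_of_notMem_faceTile (hL : LipschitzWith L (hyperplaneGraph hk a))
    (hρ : 0 < ρ) {y : EuclideanSpace ℝ (Fin d)} (hy : y ∈ P)
    (hcov : ∀ z, latticeCube ρ z ⊆ dropCoord k '' P → y ∉ faceTile hk a ρ z) :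
    ∃ w, ⟪ν, w⟫ = a ∧ w ∉ P ∧ dist y w ≤ L * ρ := by
  have hyu := mem_latticeCube_floor hρ (dropCoord k y)
  have hgy : hyperplaneGraph hk a (dropCoord k y) = y := hyperplaneGraph_dropCoord hk a (hP hy)
  -- the lattice cube containing the projection of `y` sticks out of the projection of `P`
  obtain ⟨q, hq, hqP⟩ := not_subset.1 fun hsub => hcov _ hsub ⟨_, hyu, hgy⟩
  refine ⟨hyperplaneGraph hk a q, inner_hyperplaneGraph hk a q, fun hw => hqP ⟨_, hw,
    leftInverse_dropCoord_hyperplaneGraph hk a q⟩, ?_⟩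
  calc dist y (hyperplaneGraph hk a q)
        = dist (hyperplaneGraph hk a (dropCoord k y)) (hyperplaneGraph hk a q) := by rw [hgy]
    _ ≤ L * dist (dropCoord k y) q := hL.dist_le_mul _ _
    _ ≤ L * ρ := mul_le_mul_of_nonneg_left (dist_le_of_mem_latticeCube hρ.le hyu hq) L.coe_nonneg

end FaceTile

theorem exists_faceTiling {d : ℕ} (hd : 2 ≤ d) {ν : EuclideanSpace ℝ (Fin d)} {k : Fin d}
    (hk : ν k ≠ 0) {a : ℝ} {O P : Set (EuclideanSpace ℝ (Fin d))} (hO : IsOpen O)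
    (hP : P = {x | ⟪ν, x⟫ = a} ∩ O) (hPb : IsBounded P) {L : ℝ≥0} (hL1 : 1 ≤ L)
    (hL : LipschitzWith L (hyperplaneGraph hk a)) {ρ : ℝ} (hρ : 0 < ρ) :
    ∃ (M : ℕ) (Γ : Fin M → Set (EuclideanSpace ℝ (Fin d)))
      (E : Set (EuclideanSpace ℝ (Fin d))),
      (∀ j, MeasurableSet (Γ j)) ∧ MeasurableSet E ∧
      E ⊆ P ∧ (∀ j, Γ j ⊆ P) ∧
      (∀ i j, i ≠ j → μH[(d:ℝ) - 1] (Γ i ∩ Γ j) = 0) ∧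
      E ⊆ {y ∈ P | infDist y (closure P \ P) ≤ L * ρ} ∧
      P \ E = ⋃ j, Γ j ∧
      (∀ j, ∃ z : Fin d → ℤ,
        (fun x : EuclideanSpace ℝ (Fin d) =>
            (WithLp.toLp 2 (Function.update x k 0) : EuclideanSpace ℝ (Fin d))) '' Γ j
          = {x : EuclideanSpace ℝ (Fin d) | x k = 0 ∧
              ∀ i, i ≠ k → x i ∈ Set.Icc (ρ * z i) (ρ * z i + ρ)}) ∧
      (∀ j, ENNReal.ofReal (ρ ^ (d - 1)) ≤ μH[(d:ℝ) - 1] (Γ j) ∧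
            μH[(d:ℝ) - 1] (Γ j) ≤ ENNReal.ofReal (L ^ (d - 1) * ρ ^ (d - 1))) ∧
      (∀ j, ρ ≤ diam (Γ j) ∧ diam (Γ j) ≤ L ^ (d - 1) * ρ) := by
  set Z := {z | latticeCube ρ z ⊆ dropCoord k '' P}
  have := (finite_setOf_latticeCube_subset ((lipschitzWith_dropCoord k).isBounded_image hPb)
    hρ).to_subtype
  set e := Finite.equivFin Z
  set Γ := fun j => faceTile hk a ρ (e.symm j : Z)
  have hPH : P ⊆ {x | ⟪ν, x⟫ = a} := hP ▸ inter_subset_left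
  have hPm : MeasurableSet P := hP ▸
    (isClosed_eq (continuous_const.inner continuous_id) continuous_const).measurableSet.inter
      hO.measurableSet
  have hΓm j : MeasurableSet (Γ j) := (isCompact_faceTile hk a hL _).measurableSet
  have hstrip : P \ ⋃ j, Γ j ⊆ {y ∈ P | infDist y (closure P \ P) ≤ L * ρ} := by
    rintro y ⟨hyP, hy⟩
    obtain ⟨w, hwH, hwP, hyw⟩ := exists_dist_le_of_notMem_faceTile hk a hPH hL hρ hyP
      fun z hz hyz => hy <| mem_iUnion.2
        ⟨e ⟨z, hz⟩, by simpa only [Γ, Equiv.symm_apply_apply] using hyz⟩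
    subst hP
    exact ⟨hyP, (infDist_closure_inter_diff_le_dist (convex_hyperplane
      (innerₛₗ ℝ ν).isLinear a) hO hyP ⟨hwH, fun hwO => hwP ⟨hwH, hwO⟩⟩).trans hyw⟩
  refine ⟨Nat.card Z, Γ, P \ ⋃ j, Γ j, hΓm, hPm.diff (.iUnion hΓm), sdiff_subset,
    fun j => faceTile_subset hk a hPH (e.symm j).2, fun i j hij => ?_, hstrip,
    sdiff_sdiff_cancel_left (iUnion_subset fun j => faceTile_subset hk a hPH (e.symm j).2),
    fun j => exists_image_update_faceTile_eq hk a _, fun j => ⟨?_, ?_⟩, fun j => ⟨?_, ?_⟩⟩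
  · exact hausdorffMeasure_faceTile_inter hk a hL hρ.le
      fun h => hij (e.symm.injective (Subtype.ext h))
  · exact ofReal_pow_le_hausdorffMeasure_faceTile hk a hρ.le _
  · exact hausdorffMeasure_faceTile_le hk a hL hρ.le _
  · exact le_diam_faceTile hk a hd hL hρ.le _
  · have hLpow : (L : ℝ) ≤ L ^ (d - 1) := le_self_pow₀ hL1 (by omega)
    exact (diam_faceTile_le hk a hL hρ.le _).trans
      (mul_le_mul_of_nonneg_right hLpow hρ.le)

end FaceTiling

open FaceTiling in
theorem stmt7_general (d N : ℕ) (hd : 2 ≤ d)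
    (ν : Fin N → EuclideanSpace ℝ (Fin d)) (c : Fin N → ℝ)
    (D : Set (EuclideanSpace ℝ (Fin d)))
    (hD : D = ⋂ j, {x | c j < ⟪ν j, x⟫})
    (hDb : IsBounded D)
    (k₀ : Fin N) (Pi' : Set (EuclideanSpace ℝ (Fin d)))
    (hPi : Pi' = {x | ⟪ν k₀, x⟫ = c k₀} ∩ ⋂ j ∈ {j | j ≠ k₀}, {x | c j < ⟪ν j, x⟫})
    (k : Fin d) (hνk : ν k₀ k ≠ 0) :
    ∃ ρ₀ > 0, ∃ c₀ > 0, ∃ c₁ > 0, ∃ c₂ > 0, ∀ ρ : ℝ, 0 < ρ → ρ < ρ₀ →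
      ∃ (M : ℕ) (Γ : Fin M → Set (EuclideanSpace ℝ (Fin d)))
        (E : Set (EuclideanSpace ℝ (Fin d))),
        (∀ j, MeasurableSet (Γ j)) ∧ MeasurableSet E ∧
        E ⊆ Pi' ∧ (∀ j, Γ j ⊆ Pi') ∧
        (∀ i j, i ≠ j → μH[(d:ℝ) - 1] (Γ i ∩ Γ j) = 0) ∧
        E ⊆ {y ∈ Pi' | infDist y (closure Pi' \ Pi') ≤ c₀ * ρ} ∧
        Pi' \ E = ⋃ j, Γ j ∧
        (∀ j, ∃ z : Fin d → ℤ,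
          (fun x : EuclideanSpace ℝ (Fin d) =>
              (WithLp.toLp 2 (Function.update x k 0) : EuclideanSpace ℝ (Fin d))) '' Γ j
            = {x : EuclideanSpace ℝ (Fin d) | x k = 0 ∧
                ∀ i, i ≠ k → x i ∈ Set.Icc (ρ * z i) (ρ * z i + ρ)}) ∧
        (∀ j, ENNReal.ofReal (c₁ * ρ ^ (d - 1)) ≤ μH[(d:ℝ) - 1] (Γ j) ∧
              μH[(d:ℝ) - 1] (Γ j) ≤ ENNReal.ofReal (c₂ * ρ ^ (d - 1))) ∧
        (∀ j, c₁ * ρ ≤ Metric.diam (Γ j) ∧ Metric.diam (Γ j) ≤ c₂ * ρ) := by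
  have hO : IsOpen (⋂ j ∈ {j | j ≠ k₀}, {x : EuclideanSpace ℝ (Fin d) | c j < ⟪ν j, x⟫}) :=
    (toFinite _).isOpen_biInter fun j _ => isOpen_lt continuous_const
      (continuous_const.inner continuous_id)
  have hPib : IsBounded Pi' :=
    hDb.closure.subset (hPi ▸ hD ▸ face_subset_closure fun h => hνk (by simp [h]))
  obtain ⟨L, hL1, hL⟩ := exists_lipschitzWith_hyperplaneGraph hνk (c k₀)
  have hL0 : (0 : ℝ) < L := zero_lt_one.trans_le hL1
  refine ⟨1, one_pos, L, hL0, 1, one_pos, L ^ (d - 1), pow_pos hL0 _, fun ρ hρ _ => ?_⟩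
  simpa only [one_mul] using exists_faceTiling hd hνk hO hPi hPib hL1 hL hρ

/-- Lattice partition of a face Π of a bounded convex polygon D: for every small ρ > 0
there are measurable sets Γ₁,...,Γ_M ⊆ Π with pairwise H^{d−1}-null overlaps and a
measurable set E ⊆ Π contained in a c₀ρ-strip of the relative boundary of Π, such that
Π \ E = ⋃ Γ_j, each projection π_k(Γ_j) is a (d−1)-dimensional lattice cube of side ρ,
H^{d−1}(Γ_j) ≈ ρ^{d−1} and diam(Γ_j) ≈ ρ. -/
theorem stmt7 (d N : ℕ) (hd : 2 ≤ d)
    (ν : Fin N → EuclideanSpace ℝ (Fin d)) (c : Fin N → ℝ) (hν : ∀ j, ‖ν j‖ = 1)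
    (D : Set (EuclideanSpace ℝ (Fin d)))
    (hD : D = ⋂ j, {x | c j < ⟪ν j, x⟫})
    (hDb : IsBounded D) (hDne : D.Nonempty)
    (k₀ : Fin N) (Pi' : Set (EuclideanSpace ℝ (Fin d)))
    (hPi : Pi' = {x | ⟪ν k₀, x⟫ = c k₀} ∩ ⋂ j ∈ {j | j ≠ k₀}, {x | c j < ⟪ν j, x⟫})
    (k : Fin d) (hνk : ν k₀ k ≠ 0) :
    ∃ ρ₀ > 0, ∃ c₀ > 0, ∃ c₁ > 0, ∃ c₂ > 0, ∀ ρ : ℝ, 0 < ρ → ρ < ρ₀ →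
      ∃ (M : ℕ) (Γ : Fin M → Set (EuclideanSpace ℝ (Fin d)))
        (E : Set (EuclideanSpace ℝ (Fin d))),
        (∀ j, MeasurableSet (Γ j)) ∧ MeasurableSet E ∧
        E ⊆ Pi' ∧ (∀ j, Γ j ⊆ Pi') ∧
        (∀ i j, i ≠ j → μH[(d:ℝ) - 1] (Γ i ∩ Γ j) = 0) ∧
        E ⊆ {y ∈ Pi' | infDist y (closure Pi' \ Pi') ≤ c₀ * ρ} ∧
        Pi' \ E = ⋃ j, Γ j ∧
        (∀ j, ∃ z : Fin d → ℤ,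
          (fun x : EuclideanSpace ℝ (Fin d) =>
              (WithLp.toLp 2 (Function.update x k 0) : EuclideanSpace ℝ (Fin d))) '' Γ j
            = {x : EuclideanSpace ℝ (Fin d) | x k = 0 ∧
                ∀ i, i ≠ k → x i ∈ Set.Icc (ρ * z i) (ρ * z i + ρ)}) ∧
        (∀ j, ENNReal.ofReal (c₁ * ρ ^ (d - 1)) ≤ μH[(d:ℝ) - 1] (Γ j) ∧
              μH[(d:ℝ) - 1] (Γ j) ≤ ENNReal.ofReal (c₂ * ρ ^ (d - 1))) ∧
        (∀ j, c₁ * ρ ≤ Metric.diam (Γ j) ∧ Metric.diam (Γ j) ≤ c₂ * ρ) :=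
  stmt7_general d N hd ν c D hD hDb k₀ Pi' hPi k hνk
end

section
/- Let D ⊂ ℝ^d be a bounded convex polygonal domain whose face normals are all Diophantine, and let Π be a face of D with Diophantine normal ν. Then for every nonzero m ∈ ℤ^d, the oscillatory integral J_λ = ∫_Π e^{2πi λ m·y} dσ(y) tends to 0 as λ → ∞. -/
/-!
The face lies in the hyperplane `{x | ⟪ν, x⟫ = c}`, an isometric translate of `(ℝ ∙ ν)ᗮ`, so
`μH[d - 1]` on the face becomes a Haar measure on that `(d - 1)`-dimensional space and the phase
`λ m · y` becomes `λ (b + ⟪m, u⟫)` with `u ∈ ν⊥`. The Riemann–Lebesgue lemma for the indicator of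
the transported face gives the decay as soon as `u ↦ ⟪m, u⟫` is nonzero on `ν⊥`, i.e. `m` is not
parallel to `ν`. That is where the Diophantine condition enters: for
`d ≥ 2` some nonzero integer vector is orthogonal to `m`, hence to any multiple of `m`, while no
nonzero integer vector is orthogonal to `ν`.
-/

open MeasureTheory Metric Bornology Filter Module
open scoped RealInnerProductSpace

section

open Complex Real

theorem tendsto_setIntegral_exp_mul_atTop {V : Type*} [NormedAddCommGroup V] [NormedSpace ℝ V]
    [FiniteDimensional ℝ V] [MeasurableSpace V] [BorelSpace V]
    (μ : Measure V) [μ.IsAddHaarMeasure] {φ : StrongDual ℝ V} (hφ : φ ≠ 0) {S : Set V}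
    (hS : MeasurableSet S) :
    Tendsto (fun t : ℝ => ∫ x in S, cexp (2 * π * I * t * φ x) ∂μ) atTop (nhds 0) := by
  have hray : Tendsto (fun t : ℝ => -(t • φ)) atTop (cocompact (StrongDual ℝ V)) := by
    rw [← cobounded_eq_cocompact, ← tendsto_norm_atTop_iff_cobounded]
    simpa only [norm_neg, norm_smul, Real.norm_eq_abs] using
      tendsto_abs_atTop_atTop.atTop_mul_const (norm_pos_iff.mpr hφ)
  refine ((_root_.tendsto_integral_exp_smul_cocompact (S.indicator (1 : V → ℂ)) μ).comp
    hray).congr fun t => ?_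
  rw [Function.comp_apply, ← integral_indicator hS]
  congr 1 with x
  by_cases hx : x ∈ S
  · simp only [neg_apply, smul_apply, smul_eq_mul, neg_neg, hx, Set.indicator_of_mem,
      Pi.one_apply, Circle.smul_def, fourierChar_apply, ofReal_mul, ofReal_ofNat, mul_one]
    ring_nf
  · simp [hx]

theorem tendsto_setIntegral_exp_inner_of_subset_affineSubspace {E : Type*}
    [NormedAddCommGroup E] [InnerProductSpace ℝ E] [FiniteDimensional ℝ E]
    [MeasurableSpace E] [BorelSpace E] {V : Submodule ℝ E} {p w : E} (hw : w ∉ Vᗮ)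
    {S : Set E} (hS : MeasurableSet S) (hSV : S ⊆ AffineSubspace.mk' p V) :
    Tendsto (fun t : ℝ => ∫ y in S, cexp (2 * π * I * t * ⟪w, y⟫) ∂μH[finrank ℝ V])
      atTop (nhds 0) := by
  set ψ : V → E := fun u => u + p with hψ_def
  have hψ : Isometry ψ := (IsometryEquiv.addRight p).isometry.comp isometry_subtype_coe
  have hSψ : S ⊆ Set.range ψ := fun x hx => ⟨⟨x - p, hSV hx⟩, sub_add_cancel x p⟩
  set φ : StrongDual ℝ V := (innerSL ℝ w).comp V.subtypeL
  have hφ : φ ≠ 0 := fun h =>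
    hw <| (Submodule.mem_orthogonal' V w).mpr fun u hu => by
      simpa [φ] using DFunLike.congr_fun h ⟨u, hu⟩
  have htransfer : ∀ t : ℝ, ∫ y in S, cexp (2 * π * I * t * ⟪w, y⟫) ∂μH[finrank ℝ V] =
      cexp (2 * π * I * t * ⟪w, p⟫) *
        ∫ u in ψ ⁻¹' S, cexp (2 * π * I * t * φ u) ∂μH[finrank ℝ V] := by
    intro t
    rw [← integral_const_mul, ← Measure.restrict_restrict_of_subset hSψ,
      ← hψ.map_hausdorffMeasure (Or.inl (Nat.cast_nonneg _)),
      hψ.isClosedEmbedding.measurableEmbedding.setIntegral_map]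
    congr 1 with u
    rw [← Complex.exp_add]
    simp only [hψ_def, φ, inner_add_right, ofReal_add, ContinuousLinearMap.comp_apply,
      Submodule.coe_subtypeL, Submodule.subtype_apply, coe_innerSL_apply]
    ring_nf
  simp_rw [htransfer]
  refine isBoundedUnder_le_mul_tendsto_zero
    ⟨1, eventually_map.mpr (Eventually.of_forall fun t => ?_)⟩
    (tendsto_setIntegral_exp_mul_atTop _ hφ (hS.preimage hψ.continuous.measurable))
  have : 2 * π * I * t * ⟪w, p⟫ = ((2 * π * t * ⟪w, p⟫ : ℝ) : ℂ) * I := by push_cast; ring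
  rw [Function.comp_apply, this, norm_exp_ofReal_mul_I]

theorem tendsto_setIntegral_exp_inner_of_subset_hyperplane {E : Type*}
    [NormedAddCommGroup E] [InnerProductSpace ℝ E] [FiniteDimensional ℝ E]
    [MeasurableSpace E] [BorelSpace E] {v w : E} (hv : v ≠ 0) (hw : w ∉ ℝ ∙ v) {a : ℝ}
    {S : Set E} (hS : MeasurableSet S) (hSv : S ⊆ {x | ⟪v, x⟫ = a}) :
    Tendsto (fun t : ℝ => ∫ y in S, cexp (2 * π * I * t * ⟪w, y⟫) ∂μH[(finrank ℝ E : ℝ) - 1])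
      atTop (nhds 0) := by
  have hdim : (finrank ℝ E : ℝ) - 1 = finrank ℝ (ℝ ∙ v)ᗮ := by
    have := Submodule.finrank_add_finrank_orthogonal (ℝ ∙ v)
    rw [finrank_span_singleton hv] at this
    rw [← this]
    push_cast
    ring
  rw [hdim]
  refine tendsto_setIntegral_exp_inner_of_subset_affineSubspace (p := (a / ‖v‖ ^ 2) • v)
    (by rwa [Submodule.orthogonal_orthogonal]) hS fun x hx => ?_
  rw [SetLike.mem_coe, AffineSubspace.mem_mk', vsub_eq_sub,
    Submodule.mem_orthogonal_singleton_iff_inner_right, inner_sub_right, real_inner_smul_right,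
    real_inner_self_eq_norm_sq, hSv hx]
  field_simp
  ring

end

theorem sum_intCast_mul_ne_zero_of_diophantine {ι : Type*} [Fintype ι] {ν : EuclideanSpace ℝ ι}
    {τ c₀ : ℝ} (hc₀ : 0 < c₀)
    (h : ∀ m : ι → ℤ, m ≠ 0 → c₀ * (∑ i, |(m i : ℝ)|) ^ (-τ) ≤ |∑ i, (m i : ℝ) * ν i|)
    {m : ι → ℤ} (hm : m ≠ 0) : ∑ i, (m i : ℝ) * ν i ≠ 0 := by
  obtain ⟨i, hi⟩ := Function.ne_iff.mp hm
  have hsum : 0 < ∑ i, |(m i : ℝ)| :=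
    (abs_pos.mpr (Int.cast_ne_zero.mpr hi)).trans_le
      (Finset.single_le_sum (fun j _ => abs_nonneg (m j : ℝ)) (Finset.mem_univ i))
  exact abs_pos.mp ((mul_pos hc₀ (Real.rpow_pos_of_pos hsum _)).trans_le (h m hm))

theorem toLp_intCast_notMem_span_singleton {ι : Type*} [Fintype ι] [Nontrivial ι]
    {ν : EuclideanSpace ℝ ι} (hν : ∀ m : ι → ℤ, m ≠ 0 → ∑ i, (m i : ℝ) * ν i ≠ 0)
    {m : ι → ℤ} (hm : m ≠ 0) : WithLp.toLp 2 (fun i => (m i : ℝ)) ∉ ℝ ∙ ν := by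
  intro hmem
  obtain ⟨t, ht⟩ := Submodule.mem_span_singleton.mp hmem
  obtain ⟨m', hm', horth⟩ := exists_ne_zero_dotProduct_eq_zero m
  have hmi : ∀ i, (m i : ℝ) = t * ν i := fun i => by simpa using (congrArg (· i) ht).symm
  have ht0 : t ≠ 0 := by
    rintro rfl
    exact hm (funext fun i => by exact_mod_cast (zero_mul (ν i)) ▸ hmi i)
  have hscaled : t * ∑ i, (m' i : ℝ) * ν i = 0 := by
    have := congrArg (Int.cast : ℤ → ℝ) horth
    simp only [dotProduct, Int.cast_sum, Int.cast_mul, hmi, Int.cast_zero] at this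
    rw [Finset.mul_sum, ← this]
    exact Finset.sum_congr rfl fun i _ => by ring
  exact hν m' hm' ((mul_eq_zero.mp hscaled).resolve_left ht0)

theorem stmt8_general (d N : ℕ) (hd : 2 ≤ d)
    (ν : Fin N → EuclideanSpace ℝ (Fin d)) (c : Fin N → ℝ)
    (hdio : ∀ j, ∃ τ : ℝ, 0 < τ ∧ ∃ c₀ : ℝ, 0 < c₀ ∧ ∀ m : Fin d → ℤ, m ≠ 0 →
      c₀ * (∑ i, |(m i : ℝ)|) ^ (-τ) ≤ |∑ i, (m i : ℝ) * ν j i|)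
    (k₀ : Fin N) (Pi' : Set (EuclideanSpace ℝ (Fin d)))
    (hPi : Pi' = {x | ⟪ν k₀, x⟫ = c k₀} ∩ ⋂ j ∈ {j | j ≠ k₀}, {x | c j < ⟪ν j, x⟫})
    (m : Fin d → ℤ) (hm : m ≠ 0) :
    Tendsto (fun lam : ℝ =>
        ∫ y in Pi', Complex.exp (2 * Real.pi * Complex.I * lam *
          ((∑ i, (m i : ℝ) * y i : ℝ) : ℂ)) ∂(μH[(d:ℝ) - 1]))
      atTop (nhds 0) := by
  obtain ⟨τ, -, c₀, hc₀, hbound⟩ := hdio k₀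
  have hν : ∀ m' : Fin d → ℤ, m' ≠ 0 → ∑ i, (m' i : ℝ) * ν k₀ i ≠ 0 := fun _ =>
    sum_intCast_mul_ne_zero_of_diophantine hc₀ hbound
  have : Nontrivial (Fin d) := Fin.nontrivial_iff_two_le.mpr hd
  have hν0 : ν k₀ ≠ 0 := fun h => hν (Pi.single ⟨0, by omega⟩ 1) (by simp) (by simp [h])
  have hPimeas : MeasurableSet Pi' := by
    rw [hPi]
    measurability
  have hphase : ∀ y : EuclideanSpace ℝ (Fin d),
      ∑ i, (m i : ℝ) * y i = ⟪WithLp.toLp 2 (fun i => (m i : ℝ)), y⟫ := fun y => by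
    simp [PiLp.inner_apply, mul_comm]
  simp_rw [hphase]
  simpa only [finrank_euclideanSpace_fin] using
    tendsto_setIntegral_exp_inner_of_subset_hyperplane hν0
      (toLp_intCast_notMem_span_singleton hν hm) hPimeas (hPi ▸ Set.inter_subset_left)

/-- For a bounded convex polygonal domain D whose face normals are Diophantine, and a face Π
with Diophantine normal, the oscillatory integral ∫_Π e^{2πiλ m·y} dσ(y) tends to 0 as
λ → ∞, for every nonzero m ∈ ℤ^d. -/
theorem stmt8 (d N : ℕ) (hd : 2 ≤ d)
    (ν : Fin N → EuclideanSpace ℝ (Fin d)) (c : Fin N → ℝ) (hν : ∀ j, ‖ν j‖ = 1)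
    (hdio : ∀ j, ∃ τ : ℝ, 0 < τ ∧ ∃ c₀ : ℝ, 0 < c₀ ∧ ∀ m : Fin d → ℤ, m ≠ 0 →
      c₀ * (∑ i, |(m i : ℝ)|) ^ (-τ) ≤ |∑ i, (m i : ℝ) * ν j i|)
    (D : Set (EuclideanSpace ℝ (Fin d)))
    (hD : D = ⋂ j, {x | c j < ⟪ν j, x⟫})
    (hDb : IsBounded D) (hDne : D.Nonempty)
    (k₀ : Fin N) (Pi' : Set (EuclideanSpace ℝ (Fin d)))
    (hPi : Pi' = {x | ⟪ν k₀, x⟫ = c k₀} ∩ ⋂ j ∈ {j | j ≠ k₀}, {x | c j < ⟪ν j, x⟫})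
    (m : Fin d → ℤ) (hm : m ≠ 0) :
    Tendsto (fun lam : ℝ =>
        ∫ y in Pi', Complex.exp (2 * Real.pi * Complex.I * lam *
          ((∑ i, (m i : ℝ) * y i : ℝ) : ℂ)) ∂(μH[(d:ℝ) - 1]))
      atTop (nhds 0) :=
  stmt8_general d N hd ν c hdio k₀ Pi' hPi m hm
end
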